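/- arXiv:1601.00099 — 12 statements merged into one kernel-verified Lean document; each statement's English description precedes it below -/
import Mathlib

section
/- Let a < b be real numbers and p > 1 a real number. If f : ℝ → ℝ is continuous on [a,b], differentiable on [a,b], with f(a) ≥ 0 and f'(x) ≥ p for all x ∈ [a,b], then ∫_a^b f(x)^{p+2} dx ≥ (1/(b−a)^{p−1}) · (∫_a^b f(x) dx)^{p+1}. -/
/-!
Put `F x = ∫_a^x f` and `K x = ∫_a^x f ^ (p + 2)`. Since `f' ≥ p`, `f u ≤ f x - p (x - u)` for
`u ≤ x`; this gives `f x ≥ p (x - a)` and, after integration,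
`F x ≤ (x - a) (f x - p (x - a) / 2)`. A weighted AM-GM inequality together with Bernoulli's
`(1 + 1/p) ^ p ≥ 2` turns this into `(p + 1) F x ^ p ≤ (x - a) ^ (p - 1) f x ^ (p + 1)`, which is
exactly what makes `(x - a) ^ (p - 1) K x - F x ^ (p + 1)` nondecreasing; it vanishes at `a`, so it
is nonnegative at `b`.
-/

open Real Set intervalIntegral

lemma add_one_rpow_add_one_mul_mul_rpow_le {q s c : ℝ} (hq : 0 < q) (hs : 0 ≤ s) (hc : 0 ≤ c) :
    (q + 1) ^ (q + 1) * s * c ^ q ≤ q ^ q * (c + s) ^ (q + 1) := by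
  have hq1 : 0 < q + 1 := by linarith
  have hs' : 0 ≤ (q + 1) * s := by positivity
  have hc' : 0 ≤ (q + 1) / q * c := by positivity
  -- weighted AM-GM, scaled so that equality holds at `c = q s`
  have amgm : ((q + 1) * s) ^ (1 / (q + 1)) * ((q + 1) / q * c) ^ (q / (q + 1)) ≤ c + s := by
    have h := geom_mean_le_arith_mean2_weighted (by positivity) (by positivity) hs' hc'
      (show 1 / (q + 1) + q / (q + 1) = 1 by field_simp; ring)
    convert h using 1
    field_simp
    ring
  have hpow := rpow_le_rpow (by positivity) amgm hq1.le
  rw [mul_rpow (by positivity) (by positivity), ← rpow_mul hs', ← rpow_mul hc',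
    one_div_mul_cancel hq1.ne', div_mul_cancel₀ _ hq1.ne', rpow_one,
    mul_rpow (by positivity) hc, div_rpow hq1.le hq.le] at hpow
  rw [rpow_add_one hq1.ne']
  calc (q + 1) ^ q * (q + 1) * s * c ^ q
      = q ^ q * ((q + 1) * s * ((q + 1) ^ q / q ^ q * c ^ q)) := by field_simp
    _ ≤ q ^ q * (c + s) ^ (q + 1) := by gcongr

lemma two_mul_rpow_self_le_add_one_rpow {p : ℝ} (hp : 1 ≤ p) : 2 * p ^ p ≤ (p + 1) ^ p := by
  have hp0 : 0 < p := by linarith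
  have bernoulli := one_add_mul_self_le_rpow_one_add
    (show -1 ≤ 1 / p by linarith [one_div_pos.2 hp0]) hp
  rw [mul_one_div_cancel hp0.ne', one_add_one_eq_two] at bernoulli
  calc 2 * p ^ p ≤ (1 + 1 / p) ^ p * p ^ p := by gcongr
    _ = (p + 1) ^ p := by
      rw [← mul_rpow (by positivity) hp0.le, add_mul, one_div_mul_cancel hp0.ne', one_mul,
        add_comm]

lemma add_one_mul_mul_rpow_sub_le {p t v : ℝ} (hp : 1 ≤ p) (ht : 0 ≤ t) (hv : p * t / 2 ≤ v) :
    (p + 1) * t * (v - p * t / 2) ^ p ≤ v ^ (p + 1) := by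
  have hp0 : 0 < p := by linarith
  have amgm := add_one_rpow_add_one_mul_mul_rpow_le (s := p * t / 2) hp0 (by positivity)
    (sub_nonneg.2 hv)
  rw [sub_add_cancel, rpow_add_one (by linarith)] at amgm
  have hB := two_mul_rpow_self_le_add_one_rpow hp
  have hpp : 0 < p ^ p := rpow_pos_of_pos hp0 p
  refine le_of_mul_le_mul_left ?_ hpp
  calc p ^ p * ((p + 1) * t * (v - p * t / 2) ^ p)
      ≤ p ^ p * (p * ((p + 1) * t * (v - p * t / 2) ^ p)) :=
        mul_le_mul_of_nonneg_left (le_mul_of_one_le_left (by positivity) hp) hpp.le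
    _ = 2 * p ^ p * (p + 1) * (p * t / 2) * (v - p * t / 2) ^ p := by ring
    _ ≤ (p + 1) ^ p * (p + 1) * (p * t / 2) * (v - p * t / 2) ^ p := by gcongr
    _ ≤ p ^ p * v ^ (p + 1) := amgm

lemma add_one_mul_rpow_le {p t v F : ℝ} (hp : 1 ≤ p) (ht : 0 ≤ t) (hv : p * t / 2 ≤ v)
    (hF₀ : 0 ≤ F) (hF : F ≤ t * (v - p * t / 2)) :
    (p + 1) * F ^ p ≤ t ^ (p - 1) * v ^ (p + 1) := by
  have ht' : t ^ p = t ^ (p - 1) * t := by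
    rw [← rpow_add_one' ht (by linarith), sub_add_cancel]
  calc (p + 1) * F ^ p ≤ (p + 1) * (t * (v - p * t / 2)) ^ p := by gcongr
    _ = t ^ (p - 1) * ((p + 1) * t * (v - p * t / 2) ^ p) := by
      rw [mul_rpow ht (by linarith), ht']; ring
    _ ≤ t ^ (p - 1) * v ^ (p + 1) := by
      gcongr
      exact add_one_mul_mul_rpow_sub_le hp ht hv

section

variable {a b p : ℝ} {f : ℝ → ℝ}

lemma continuousOn_primitive_of_continuousOn_Icc (hab : a ≤ b) (hf : ContinuousOn f (Icc a b)) :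
    ContinuousOn (fun x => ∫ u in a..x, f u) (Icc a b) := by
  have h := continuousOn_primitive_interval (μ := MeasureTheory.volume)
    (hf.integrableOn_Icc.mono_set (uIcc_of_le hab).le)
  rwa [uIcc_of_le hab] at h

lemma hasDerivAt_primitive_of_continuousOn_Icc (hf : ContinuousOn f (Icc a b)) {x : ℝ}
    (hx : x ∈ Ioo a b) : HasDerivAt (fun y => ∫ u in a..y, f u) (f x) x :=
  integral_hasDerivAt_right
    ((hf.mono (Icc_subset_Icc_right hx.2.le)).intervalIntegrable_of_Icc hx.1.le)
    ((hf.mono Ioo_subset_Icc_self).stronglyMeasurableAtFilter isOpen_Ioo x hx)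
    (hf.continuousAt (Icc_mem_nhds hx.1 hx.2))

lemma integral_le_of_add_mul_sub_le {x : ℝ} (hax : a ≤ x)
    (hf : IntervalIntegrable f MeasureTheory.volume a x)
    (h : ∀ u ∈ Icc a x, f u + p * (x - u) ≤ f x) :
    ∫ u in a..x, f u ≤ (x - a) * (f x - p * (x - a) / 2) :=
  calc ∫ u in a..x, f u ≤ ∫ u in a..x, (f x - p * (x - u)) :=
        integral_mono_on hax hf (Continuous.intervalIntegrable (by fun_prop) a x)
          fun u hu => by linarith [h u hu]
    _ = (x - a) * (f x - p * (x - a) / 2) := by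
        rw [integral_sub intervalIntegrable_const (Continuous.intervalIntegrable (by fun_prop) a x),
          intervalIntegral.integral_const_mul, integral_sub intervalIntegrable_const
            intervalIntegral.intervalIntegrable_id, intervalIntegral.integral_const,
          intervalIntegral.integral_const, integral_id, smul_eq_mul, smul_eq_mul]
        ring

noncomputable def qiDefect (f : ℝ → ℝ) (a p x : ℝ) : ℝ :=
  (x - a) ^ (p - 1) * (∫ u in a..x, f u ^ (p + 2)) - (∫ u in a..x, f u) ^ (p + 1)

lemma continuousOn_qiDefect (hab : a ≤ b) (hp : 1 ≤ p) (hf : ContinuousOn f (Icc a b)) :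
    ContinuousOn (qiDefect f a p) (Icc a b) :=
  (((continuousOn_id.sub continuousOn_const).rpow_const fun _ _ => Or.inr (by linarith)).mul
    (continuousOn_primitive_of_continuousOn_Icc hab
      (hf.rpow_const fun _ _ => Or.inr (by linarith)))).sub
    ((continuousOn_primitive_of_continuousOn_Icc hab hf).rpow_const
      fun _ _ => Or.inr (by linarith))

lemma hasDerivAt_qiDefect (hp : 0 ≤ p) (hf : ContinuousOn f (Icc a b)) {x : ℝ}
    (hx : x ∈ Ioo a b) :
    HasDerivAt (qiDefect f a p)
      ((p - 1) * (x - a) ^ (p - 2) * (∫ u in a..x, f u ^ (p + 2))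
        + (x - a) ^ (p - 1) * f x ^ (p + 2) - f x * (p + 1) * (∫ u in a..x, f u) ^ p) x := by
  have hpow : HasDerivAt (fun y => (y - a) ^ (p - 1)) ((p - 1) * (x - a) ^ (p - 2)) x := by
    convert ((hasDerivAt_id' x).sub_const a).rpow_const (p := p - 1)
      (Or.inl (sub_pos.2 hx.1).ne') using 1
    rw [one_mul, sub_sub, one_add_one_eq_two]
  have hFpow : HasDerivAt (fun y => (∫ u in a..y, f u) ^ (p + 1))
      (f x * (p + 1) * (∫ u in a..x, f u) ^ p) x := by
    convert (hasDerivAt_primitive_of_continuousOn_Icc hf hx).rpow_const (p := p + 1)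
      (Or.inr (by linarith)) using 1
    rw [add_sub_cancel_right]
  exact (hpow.mul (hasDerivAt_primitive_of_continuousOn_Icc
    (hf.rpow_const fun _ _ => Or.inr (by linarith)) hx)).sub hFpow

lemma monotoneOn_qiDefect (hab : a ≤ b) (hp : 1 ≤ p) (hf : ContinuousOn f (Icc a b))
    (hf₀ : ∀ x ∈ Icc a b, 0 ≤ f x)
    (hprim : ∀ x ∈ Ioo a b,
      (p + 1) * (∫ u in a..x, f u) ^ p ≤ (x - a) ^ (p - 1) * f x ^ (p + 1)) :
    MonotoneOn (qiDefect f a p) (Icc a b) := by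
  refine monotoneOn_of_hasDerivWithinAt_nonneg (convex_Icc a b) (continuousOn_qiDefect hab hp hf)
    (by simpa only [interior_Icc] using fun x hx =>
      (hasDerivAt_qiDefect (by linarith) hf hx).hasDerivWithinAt)
    fun x hx => ?_
  rw [interior_Icc] at hx
  have hx' := Ioo_subset_Icc_self hx
  have hK : 0 ≤ (p - 1) * (x - a) ^ (p - 2) * ∫ u in a..x, f u ^ (p + 2) :=
    mul_nonneg (mul_nonneg (by linarith) (rpow_nonneg (sub_nonneg.2 hx'.1) _))
      (integral_nonneg hx'.1 fun u hu => rpow_nonneg (hf₀ u ⟨hu.1, hu.2.trans hx'.2⟩) _)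
  have hF : f x * (p + 1) * (∫ u in a..x, f u) ^ p ≤ (x - a) ^ (p - 1) * f x ^ (p + 2) := by
    rw [show p + 2 = p + 1 + 1 by ring, rpow_add_one' (hf₀ x hx') (by linarith)]
    nlinarith [mul_le_mul_of_nonneg_left (hprim x hx) (hf₀ x hx')]
  linarith

theorem rpow_integral_le_of_primitive_le (hab : a ≤ b) (hp : 1 ≤ p)
    (hf : ContinuousOn f (Icc a b)) (hf₀ : ∀ x ∈ Icc a b, 0 ≤ f x)
    (hprim : ∀ x ∈ Ioo a b,
      (p + 1) * (∫ u in a..x, f u) ^ p ≤ (x - a) ^ (p - 1) * f x ^ (p + 1)) :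
    (∫ u in a..b, f u) ^ (p + 1) ≤ (b - a) ^ (p - 1) * ∫ u in a..b, f u ^ (p + 2) := by
  have h := monotoneOn_qiDefect hab hp hf hf₀ hprim (left_mem_Icc.2 hab) (right_mem_Icc.2 hab) hab
  simp only [qiDefect, sub_self, integral_same, mul_zero,
    zero_rpow (show p + 1 ≠ 0 by linarith)] at h
  linarith

end

theorem akkouchi_qi_inequality_general
    (a b p : ℝ) (hab : a < b) (hp : 1 < p)
    (f f' : ℝ → ℝ)
    (hderiv : ∀ x ∈ Set.Icc a b, HasDerivAt f (f' x) x)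
    (hfa : 0 ≤ f a)
    (hf' : ∀ x ∈ Set.Icc a b, p ≤ f' x) :
    (∫ x in a..b, f x ^ (p + 2)) ≥
      (1 / (b - a) ^ (p - 1)) * (∫ x in a..b, f x) ^ (p + 1) := by
  have hcont : ContinuousOn f (Icc a b) := fun x hx =>
    (hderiv x hx).continuousAt.continuousWithinAt
  have hgrowth : ∀ u ∈ Icc a b, ∀ x ∈ Icc a b, u ≤ x → p * (x - u) ≤ f x - f u :=
    (convex_Icc a b).mul_sub_le_image_sub_of_le_deriv hcont
      (fun x hx => (hderiv x (interior_subset hx)).differentiableAt.differentiableWithinAt)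
      fun x hx => (hderiv x (interior_subset hx)).deriv ▸ hf' x (interior_subset hx)
  have hlower : ∀ x ∈ Icc a b, p * (x - a) ≤ f x := fun x hx => by
    linarith [hgrowth a (left_mem_Icc.2 hab.le) x hx hx.1]
  have hf₀ : ∀ x ∈ Icc a b, 0 ≤ f x := fun x hx =>
    (mul_nonneg (by linarith) (sub_nonneg.2 hx.1)).trans (hlower x hx)
  have hprim : ∀ x ∈ Ioo a b,
      (p + 1) * (∫ u in a..x, f u) ^ p ≤ (x - a) ^ (p - 1) * f x ^ (p + 1) := fun x hx => by
    have hx' := Ioo_subset_Icc_self hx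
    have hsub : Icc a x ⊆ Icc a b := Icc_subset_Icc_right hx'.2
    refine add_one_mul_rpow_le hp.le (sub_nonneg.2 hx'.1) ?_
      (integral_nonneg hx'.1 fun u hu => hf₀ u (hsub hu))
      (integral_le_of_add_mul_sub_le hx'.1 ((hcont.mono hsub).intervalIntegrable_of_Icc hx'.1)
        fun u hu => by linarith [hgrowth u (hsub hu) x hx' hu.2])
    linarith [hlower x hx', mul_nonneg (by linarith : (0 : ℝ) ≤ p) (sub_nonneg.2 hx'.1)]
  rw [ge_iff_le, one_div, inv_mul_le_iff₀ (rpow_pos_of_pos (sub_pos.2 hab) _)]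
  exact rpow_integral_le_of_primitive_le hab.le hp.le hcont hf₀ hprim

theorem akkouchi_qi_inequality
    (a b p : ℝ) (hab : a < b) (hp : 1 < p)
    (f f' : ℝ → ℝ)
    (hcont : ContinuousOn f (Set.Icc a b))
    (hderiv : ∀ x ∈ Set.Icc a b, HasDerivAt f (f' x) x)
    (hfa : 0 ≤ f a)
    (hf' : ∀ x ∈ Set.Icc a b, p ≤ f' x) :
    (∫ x in a..b, f x ^ (p + 2)) ≥
      (1 / (b - a) ^ (p - 1)) * (∫ x in a..b, f x) ^ (p + 1) :=
  akkouchi_qi_inequality_general a b p hab hp f f' hderiv hfa hf'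
end

section
/- Let a < b be real numbers and t ≥ 3 a real number. If f : ℝ → ℝ is nonnegative and monotone increasing on [a,b], differentiable on [a,b], and satisfies f'(x) ≥ (t−2)·(x−a)^{t−3} for all x ∈ [a,b], then ∫_a^b f(x)^t dx − (∫_a^b f(x) dx)^{t−1} ≥ f(a)^{t−1} · ∫_a^b f(x) dx. -/
open Real Set intervalIntegral

theorem krasniqi_qi_inequality_t
    (a b t : ℝ) (hab : a < b) (ht : 3 ≤ t)
    (f f' : ℝ → ℝ)
    (hnonneg : ∀ x ∈ Set.Icc a b, 0 ≤ f x)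
    (hmono : MonotoneOn f (Set.Icc a b))
    (hderiv : ∀ x ∈ Set.Icc a b, HasDerivAt f (f' x) x)
    (hf' : ∀ x ∈ Set.Icc a b, (t - 2) * (x - a) ^ (t - 3) ≤ f' x) :
    (∫ x in a..b, f x ^ t) - (∫ x in a..b, f x) ^ (t - 1) ≥
      f a ^ (t - 1) * ∫ x in a..b, f x := by
  have ht1 : (1:ℝ) ≤ t - 1 := by linarith
  have ht2 : (1:ℝ) ≤ t - 2 := by linarith
  have ht3 : (0:ℝ) ≤ t - 3 := by linarith
  have haI : a ∈ Icc a b := ⟨le_rfl, hab.le⟩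
  have hbI : b ∈ Icc a b := ⟨hab.le, le_rfl⟩
  have hfca : ∀ x ∈ Icc a b, ContinuousAt f x := fun x hx => (hderiv x hx).continuousAt
  have hfc : ContinuousOn f (Icc a b) := fun x hx => (hfca x hx).continuousWithinAt
  set I : ℝ → ℝ := fun x => ∫ s in a..x, f s with hIdef
  -- integrability
  have hIntf : ∀ x ∈ Icc a b, IntervalIntegrable f MeasureTheory.volume a x := by
    intro x hx
    apply ContinuousOn.intervalIntegrable
    apply hfc.mono
    rw [uIcc_of_le hx.1]
    exact Icc_subset_Icc le_rfl hx.2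
  -- continuity of I
  have hIcont : ContinuousOn I (Icc a b) := by
    rw [hIdef, show Icc a b = uIcc a b from (uIcc_of_le hab.le).symm]
    exact intervalIntegral.continuousOn_primitive_interval
      (by rw [uIcc_of_le hab.le]; exact hfc.integrableOn_Icc)
  -- derivative of I at interior points
  have hIderiv : ∀ x ∈ Ioo a b, HasDerivAt I (f x) x := by
    intro x hx
    have hxI : x ∈ Icc a b := Ioo_subset_Icc_self hx
    exact intervalIntegral.integral_hasDerivAt_right (hIntf x hxI)
      (ContinuousOn.stronglyMeasurableAtFilter isOpen_Ioo
        (hfc.mono Ioo_subset_Icc_self) x hx) (hfca x hxI)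
  have hI0 : I a = 0 := intervalIntegral.integral_same
  have hInn : ∀ x ∈ Icc a b, 0 ≤ I x := by
    intro x hx
    apply intervalIntegral.integral_nonneg hx.1
    intro u hu
    exact hnonneg u ⟨hu.1, hu.2.trans hx.2⟩
  have hIle : ∀ x ∈ Icc a b, I x ≤ (x - a) * f x := by
    intro x hx
    have h := intervalIntegral.integral_mono_on hx.1 (hIntf x hx)
      (_root_.intervalIntegrable_const (c := f x))
      (fun u hu => hmono ⟨hu.1, hu.2.trans hx.2⟩ hx hu.2)
    simpa [smul_eq_mul] using h
  -- the function G
  set G : ℝ → ℝ := fun x => f x ^ (t-1) - (t-1) * (I x) ^ (t-2) - f a ^ (t-1) with hGdef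
  have hGderiv : ∀ x ∈ Ioo a b, HasDerivAt G
      (f' x * (t-1) * f x ^ (t-1-1) - (t-1) * (f x * (t-2) * (I x) ^ (t-2-1))) x := by
    intro x hx
    have hxI : x ∈ Icc a b := Ioo_subset_Icc_self hx
    have h1 : HasDerivAt (fun y => f y ^ (t-1)) (f' x * (t-1) * f x ^ (t-1-1)) x :=
      (hderiv x hxI).rpow_const (Or.inr ht1)
    have h2 : HasDerivAt (fun y => (t-1) * (I y) ^ (t-2))
        ((t-1) * (f x * (t-2) * (I x) ^ (t-2-1))) x :=
      (((hIderiv x hx).rpow_const (Or.inr ht2))).const_mul (t-1)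
    exact ((h1.sub h2).sub_const (f a ^ (t-1)))
  have hGcont : ContinuousOn G (Icc a b) := by
    apply ContinuousOn.sub
    apply ContinuousOn.sub
    · exact hfc.rpow_const (fun x hx => Or.inr (by linarith))
    · exact continuousOn_const.mul (hIcont.rpow_const (fun x hx => Or.inr (by linarith)))
    · exact continuousOn_const
  have hGd0 : ∀ x ∈ Ioo a b,
      0 ≤ f' x * (t-1) * f x ^ (t-1-1) - (t-1) * (f x * (t-2) * (I x) ^ (t-2-1)) := by
    intro x hx
    have hxI : x ∈ Icc a b := Ioo_subset_Icc_self hx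
    have hfx : 0 ≤ f x := hnonneg x hxI
    have hxa : 0 ≤ x - a := by linarith [hx.1]
    have hInx : 0 ≤ I x := hInn x hxI
    have key : (I x) ^ (t-3) ≤ (x-a) ^ (t-3) * f x ^ (t-3) := by
      have h1 : (I x) ^ (t-3) ≤ ((x-a) * f x) ^ (t-3) :=
        Real.rpow_le_rpow hInx (hIle x hxI) ht3
      rwa [Real.mul_rpow hxa hfx] at h1
    have hfe : f x ^ (t-2) = f x * f x ^ (t-3) := by
      rw [show t-2 = 1 + (t-3) by ring, Real.rpow_add' hfx (by linarith), Real.rpow_one]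
    have hkey2 : f x * (t-2) * (I x) ^ (t-3) ≤ f' x * f x ^ (t-2) := by
      calc f x * (t-2) * (I x) ^ (t-3)
          ≤ f x * (t-2) * ((x-a) ^ (t-3) * f x ^ (t-3)) := by
            apply mul_le_mul_of_nonneg_left key
            exact mul_nonneg hfx (by linarith)
        _ = ((t-2) * (x-a) ^ (t-3)) * (f x * f x ^ (t-3)) := by ring
        _ = ((t-2) * (x-a) ^ (t-3)) * f x ^ (t-2) := by rw [hfe]
        _ ≤ f' x * f x ^ (t-2) := by
            apply mul_le_mul_of_nonneg_right (hf' x hxI)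
            exact Real.rpow_nonneg hfx _
    have e1 : t - 1 - 1 = t - 2 := by ring
    have e2 : t - 2 - 1 = t - 3 := by ring
    rw [e1, e2]
    nlinarith [hkey2]
  have hGmono : MonotoneOn G (Icc a b) := by
    apply monotoneOn_of_deriv_nonneg (convex_Icc a b) hGcont
    · intro x hx
      rw [interior_Icc] at hx
      exact (hGderiv x hx).differentiableAt.differentiableWithinAt
    · intro x hx
      rw [interior_Icc] at hx
      rw [(hGderiv x hx).deriv]
      exact hGd0 x hx
  have hGa : G a = 0 := by
    simp only [hGdef, hI0, Real.zero_rpow (by linarith : t - 2 ≠ 0)]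
    ring
  have hGnn : ∀ x ∈ Icc a b, 0 ≤ G x := by
    intro x hx
    rw [← hGa]
    exact hGmono haI hx hx.1
  -- the main function F
  set g : ℝ → ℝ := fun s => f s ^ t with hgdef
  have hgca : ∀ x ∈ Icc a b, ContinuousAt g x :=
    fun x hx => (hfca x hx).rpow_const (Or.inr (by linarith))
  have hgc : ContinuousOn g (Icc a b) := fun x hx => (hgca x hx).continuousWithinAt
  have hIntg : ∀ x ∈ Icc a b, IntervalIntegrable g MeasureTheory.volume a x := by
    intro x hx
    apply ContinuousOn.intervalIntegrable
    apply hgc.mono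
    rw [uIcc_of_le hx.1]
    exact Icc_subset_Icc le_rfl hx.2
  set J : ℝ → ℝ := fun x => ∫ s in a..x, g s with hJdef
  have hJcont : ContinuousOn J (Icc a b) := by
    rw [hJdef, show Icc a b = uIcc a b from (uIcc_of_le hab.le).symm]
    exact intervalIntegral.continuousOn_primitive_interval
      (by rw [uIcc_of_le hab.le]; exact hgc.integrableOn_Icc)
  have hJderiv : ∀ x ∈ Ioo a b, HasDerivAt J (g x) x := by
    intro x hx
    have hxI : x ∈ Icc a b := Ioo_subset_Icc_self hx
    exact intervalIntegral.integral_hasDerivAt_right (hIntg x hxI)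
      (ContinuousOn.stronglyMeasurableAtFilter isOpen_Ioo
        (hgc.mono Ioo_subset_Icc_self) x hx) (hgca x hxI)
  set F : ℝ → ℝ := fun x => J x - (I x) ^ (t-1) - f a ^ (t-1) * I x with hFdef
  have hFcont : ContinuousOn F (Icc a b) := by
    apply ContinuousOn.sub
    apply ContinuousOn.sub hJcont
    · exact hIcont.rpow_const (fun x hx => Or.inr (by linarith))
    · exact continuousOn_const.mul hIcont
  have hFderiv : ∀ x ∈ Ioo a b, HasDerivAt F
      (g x - f x * (t-1) * (I x) ^ (t-1-1) - f a ^ (t-1) * f x) x := by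
    intro x hx
    exact (((hJderiv x hx).sub ((hIderiv x hx).rpow_const (Or.inr ht1))).sub
      ((hIderiv x hx).const_mul (f a ^ (t-1))))
  have hFd0 : ∀ x ∈ Ioo a b,
      0 ≤ g x - f x * (t-1) * (I x) ^ (t-1-1) - f a ^ (t-1) * f x := by
    intro x hx
    have hxI : x ∈ Icc a b := Ioo_subset_Icc_self hx
    have hfx : 0 ≤ f x := hnonneg x hxI
    have hG := hGnn x hxI
    have hge : g x = f x * f x ^ (t-1) := by
      have h := Real.rpow_add' hfx (show (1:ℝ)+(t-1) ≠ 0 by linarith)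
      rw [Real.rpow_one, show (1:ℝ)+(t-1)=t by ring] at h
      exact h
    have e1 : t - 1 - 1 = t - 2 := by ring
    rw [e1, hge]
    simp only [hGdef] at hG
    nlinarith [mul_nonneg hfx hG]
  have hFmono : MonotoneOn F (Icc a b) := by
    apply monotoneOn_of_deriv_nonneg (convex_Icc a b) hFcont
    · intro x hx
      rw [interior_Icc] at hx
      exact (hFderiv x hx).differentiableAt.differentiableWithinAt
    · intro x hx
      rw [interior_Icc] at hx
      rw [(hFderiv x hx).deriv]
      exact hFd0 x hx
  have hFa : F a = 0 := by
    simp only [hFdef, hJdef, hI0, intervalIntegral.integral_same,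
      Real.zero_rpow (by linarith : t - 1 ≠ 0)]
    ring
  have hFb := hFmono haI hbI hab.le
  rw [hFa] at hFb
  have : F b = (∫ x in a..b, f x ^ t) - (∫ x in a..b, f x) ^ (t-1)
      - f a ^ (t-1) * ∫ x in a..b, f x := rfl
  rw [this] at hFb
  linarith
end

section
/- Let a < b be real numbers and p ≥ 1 a real number. If f : ℝ → ℝ is nonnegative and monotone increasing on [a,b], differentiable on [a,b], and satisfies f'(x) ≥ p·((x−a)/(b−a))^{p−1} for all x ∈ [a,b], then ∫_a^b f(x)^{p+2} dx − (1/(b−a)^{p−1})·(∫_a^b f(x) dx)^{p+1} ≥ f(a)^{p+1} · ∫_a^b f(x) dx. -/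
open Real Set intervalIntegral

theorem krasniqi_qi_inequality_p
    (a b p : ℝ) (hab : a < b) (hp : 1 ≤ p)
    (f f' : ℝ → ℝ)
    (hnonneg : ∀ x ∈ Set.Icc a b, 0 ≤ f x)
    (hmono : MonotoneOn f (Set.Icc a b))
    (hderiv : ∀ x ∈ Set.Icc a b, HasDerivAt f (f' x) x)
    (hf' : ∀ x ∈ Set.Icc a b, p * ((x - a) / (b - a)) ^ (p - 1) ≤ f' x) :
    (∫ x in a..b, f x ^ (p + 2)) -
        (1 / (b - a) ^ (p - 1)) * (∫ x in a..b, f x) ^ (p + 1) ≥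
      f a ^ (p + 1) * ∫ x in a..b, f x := by
  have hba : (0:ℝ) < b - a := sub_pos.2 hab
  set c : ℝ := (b - a) ^ (p - 1) with hc
  have hcpos : 0 < c := rpow_pos_of_pos hba _
  have hpp : (0:ℝ) < p := lt_of_lt_of_le one_pos hp
  -- continuity of f on Icc
  have hcontAt : ∀ x ∈ Icc a b, ContinuousAt f x := fun x hx => (hderiv x hx).continuousAt
  have hfc : ContinuousOn f (Icc a b) := fun x hx => (hcontAt x hx).continuousWithinAt
  have huIcc : uIcc a b = Icc a b := uIcc_of_le hab.le
  have hfcu : ContinuousOn f (uIcc a b) := by rw [huIcc]; exact hfc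
  have hint : IntervalIntegrable f MeasureTheory.volume a b := hfcu.intervalIntegrable
  -- the primitive
  set I : ℝ → ℝ := fun x => ∫ t in a..x, f t with hI
  have hIcont : ContinuousOn I (Icc a b) := by
    rw [← huIcc]
    exact intervalIntegral.continuousOn_primitive_interval (huIcc ▸ hfc.integrableOn_Icc)
  have hIderiv : ∀ x ∈ Ioo a b, HasDerivAt I (f x) x := by
    intro x hx
    have hxI : x ∈ Icc a b := Ioo_subset_Icc_self hx
    refine intervalIntegral.integral_hasDerivAt_right
      (hint.mono_set ?_) ?_ (hcontAt x hxI)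
    · rw [uIcc_of_le hx.1.le, huIcc]
      exact Icc_subset_Icc le_rfl hxI.2
    · exact ContinuousAt.stronglyMeasurableAtFilter isOpen_Ioo
        (fun y hy => hcontAt y (Ioo_subset_Icc_self hy)) x hx
  have hInonneg : ∀ x ∈ Icc a b, 0 ≤ I x := by
    intro x hx
    exact intervalIntegral.integral_nonneg hx.1
      (fun t ht => hnonneg t ⟨ht.1, ht.2.trans hx.2⟩)
  have hIle : ∀ x ∈ Icc a b, I x ≤ (x - a) * f x := by
    intro x hx
    have h1 : I x ≤ ∫ _ in a..x, f x := by
      apply intervalIntegral.integral_mono_on hx.1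
      · exact (hfc.mono (Icc_subset_Icc le_rfl hx.2)).intervalIntegrable_of_Icc hx.1
      · exact intervalIntegrable_const
      · exact fun t ht => hmono ⟨ht.1, ht.2.trans hx.2⟩ hx ht.2
    simpa using h1
  have hf'nonneg : ∀ x ∈ Icc a b, 0 ≤ f' x := by
    intro x hx
    refine le_trans ?_ (hf' x hx)
    have h1 : 0 ≤ (x - a) / (b - a) := div_nonneg (by linarith [hx.1]) hba.le
    exact mul_nonneg hpp.le (Real.rpow_nonneg h1 _)
  -- the auxiliary function g
  set g : ℝ → ℝ := fun x => f x ^ (p + 1) - ((p + 1) / c) * I x ^ p - f a ^ (p + 1) with hg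
  have hIa : I a = 0 := intervalIntegral.integral_same
  have hga : g a = 0 := by
    simp only [hg, hIa, Real.zero_rpow (ne_of_gt hpp)]
    ring
  -- derivative of g on Ioo
  set g' : ℝ → ℝ := fun x =>
    f' x * (p + 1) * f x ^ p - ((p + 1) / c) * (f x * p * I x ^ (p - 1)) with hg'
  have hgderiv : ∀ x ∈ Ioo a b, HasDerivAt g (g' x) x := by
    intro x hx
    have hxI : x ∈ Icc a b := Ioo_subset_Icc_self hx
    have h1 : HasDerivAt (fun y => f y ^ (p + 1)) (f' x * (p + 1) * f x ^ p) x := by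
      have := (hderiv x hxI).rpow_const (p := p + 1) (Or.inr (by linarith))
      simpa using this
    have h2 : HasDerivAt (fun y => I y ^ p) (f x * p * I x ^ (p - 1)) x :=
      (hIderiv x hx).rpow_const (Or.inr hp)
    exact (h1.sub (h2.const_mul _)).sub_const _
  have hg'nonneg : ∀ x ∈ Ioo a b, 0 ≤ g' x := by
    intro x hx
    have hxI : x ∈ Icc a b := Ioo_subset_Icc_self hx
    have hfx : 0 ≤ f x := hnonneg x hxI
    rcases eq_or_lt_of_le hfx with hfx0 | hfx0
    · simp only [hg', ← hfx0, Real.zero_rpow (ne_of_gt hpp)]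
      ring_nf
      simp [← hfx0]
    · -- main case
      have hxa : (0:ℝ) ≤ x - a := by linarith [hx.1]
      have key : I x ^ (p - 1) ≤ (x - a) ^ (p - 1) * f x ^ (p - 1) := by
        rw [← Real.mul_rpow hxa hfx]
        exact Real.rpow_le_rpow (hInonneg x hxI) (hIle x hxI) (by linarith)
      have hfp : f x ^ p = f x ^ (p - 1) * f x := by
        rw [← Real.rpow_add_one (ne_of_gt hfx0)]
        ring_nf
      have hdiv : ((x - a) / (b - a)) ^ (p - 1) = (x - a) ^ (p - 1) / c := by
        rw [hc, Real.div_rpow hxa hba.le]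
      have h3 : p * ((x - a) ^ (p - 1) / c) ≤ f' x := by
        rw [← hdiv]; exact hf' x hxI
      have h4 : ((p + 1) / c) * (f x * p * I x ^ (p - 1))
          ≤ ((p + 1) / c) * (f x * p * ((x - a) ^ (p - 1) * f x ^ (p - 1))) := by
        apply mul_le_mul_of_nonneg_left
        · apply mul_le_mul_of_nonneg_left key
          positivity
        · positivity
      have h5 : ((p + 1) / c) * (f x * p * ((x - a) ^ (p - 1) * f x ^ (p - 1)))
          ≤ f' x * (p + 1) * f x ^ p := by
        have h6 : (p * ((x - a) ^ (p - 1) / c)) * ((p + 1) * f x ^ p) ≤ f' x * ((p + 1) * f x ^ p) := by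
          apply mul_le_mul_of_nonneg_right h3
          positivity
        calc ((p + 1) / c) * (f x * p * ((x - a) ^ (p - 1) * f x ^ (p - 1)))
            = (p * ((x - a) ^ (p - 1) / c)) * ((p + 1) * (f x ^ (p - 1) * f x)) := by
              field_simp
          _ = (p * ((x - a) ^ (p - 1) / c)) * ((p + 1) * f x ^ p) := by rw [← hfp]
          _ ≤ f' x * ((p + 1) * f x ^ p) := h6
          _ = f' x * (p + 1) * f x ^ p := by ring
      simp only [hg', sub_nonneg]
      exact le_trans h4 h5
  -- continuity of g on Icc
  have hgcont : ContinuousOn g (Icc a b) := by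
    exact ((hfc.rpow_const (fun x hx => Or.inr (by linarith))).sub
      (continuousOn_const.mul (hIcont.rpow_const (fun x hx => Or.inr (by linarith))))).sub
      continuousOn_const
  have hgmono : MonotoneOn g (Icc a b) := by
    apply monotoneOn_of_deriv_nonneg (convex_Icc a b) hgcont
    · intro x hx
      rw [interior_Icc] at hx
      exact (hgderiv x hx).differentiableAt.differentiableWithinAt
    · intro x hx
      rw [interior_Icc] at hx
      rw [(hgderiv x hx).deriv]
      exact hg'nonneg x hx
  have hgnonneg : ∀ x ∈ Icc a b, 0 ≤ g x := by
    intro x hx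
    have := hgmono (left_mem_Icc.2 hab.le) hx hx.1
    rw [hga] at this
    exact this
  -- the main function F
  set F : ℝ → ℝ := fun x =>
    (∫ t in a..x, f t ^ (p + 2)) - (1 / c) * I x ^ (p + 1) - f a ^ (p + 1) * I x with hF
  have hcont2 : ContinuousOn (fun t => f t ^ (p + 2)) (Icc a b) :=
    hfc.rpow_const (fun x hx => Or.inr (by linarith))
  have hcont2u : ContinuousOn (fun t => f t ^ (p + 2)) (uIcc a b) := by rw [huIcc]; exact hcont2
  have hFa : F a = 0 := by
    simp only [hF, hIa, intervalIntegral.integral_same,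
      Real.zero_rpow (by positivity : p + 1 ≠ 0)]
    ring
  set F' : ℝ → ℝ := fun x =>
    f x ^ (p + 2) - (1 / c) * (f x * (p + 1) * I x ^ p) - f a ^ (p + 1) * f x with hF'
  have hFderiv : ∀ x ∈ Ioo a b, HasDerivAt F (F' x) x := by
    intro x hx
    have hxI : x ∈ Icc a b := Ioo_subset_Icc_self hx
    have h0 : HasDerivAt (fun y => ∫ t in a..y, f t ^ (p + 2)) (f x ^ (p + 2)) x := by
      refine intervalIntegral.integral_hasDerivAt_right
        (hcont2u.intervalIntegrable.mono_set ?_) ?_ ?_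
      · rw [uIcc_of_le hx.1.le, huIcc]
        exact Icc_subset_Icc le_rfl hxI.2
      · exact ContinuousAt.stronglyMeasurableAtFilter isOpen_Ioo
          (fun y hy => (hcontAt y (Ioo_subset_Icc_self hy)).rpow_const (Or.inr (by linarith : (0:ℝ) ≤ p + 2))) x hx
      · exact (hcontAt x hxI).rpow_const (Or.inr (by linarith : (0:ℝ) ≤ p + 2))
    have h2 : HasDerivAt (fun y => I y ^ (p + 1)) (f x * (p + 1) * I x ^ p) x := by
      have := (hIderiv x hx).rpow_const (p := p + 1) (Or.inr (by linarith))
      simpa using this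
    exact ((h0.sub (h2.const_mul _)).sub ((hIderiv x hx).const_mul _))
  have hF'nonneg : ∀ x ∈ Ioo a b, 0 ≤ F' x := by
    intro x hx
    have hxI : x ∈ Icc a b := Ioo_subset_Icc_self hx
    have hfx : 0 ≤ f x := hnonneg x hxI
    rcases eq_or_lt_of_le hfx with hfx0 | hfx0
    · simp only [hF', ← hfx0, Real.zero_rpow (by positivity : p + 2 ≠ 0)]
      ring_nf
      simp [← hfx0]
    · have hFg : F' x = f x * g x := by
        simp only [hF', hg]
        have : f x ^ (p + 2) = f x ^ (p + 1) * f x := by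
          rw [← Real.rpow_add_one (ne_of_gt hfx0)]
          ring_nf
        rw [this]
        field_simp
      rw [hFg]
      exact mul_nonneg hfx (hgnonneg x hxI)
  have hFcont : ContinuousOn F (Icc a b) := by
    have h0 : ContinuousOn (fun x => ∫ t in a..x, f t ^ (p + 2)) (Icc a b) := by
      rw [← huIcc]
      exact intervalIntegral.continuousOn_primitive_interval (huIcc ▸ hcont2.integrableOn_Icc)
    exact (h0.sub (continuousOn_const.mul
      (hIcont.rpow_const (fun x hx => Or.inr (by linarith))))).sub
      (continuousOn_const.mul hIcont)
  have hFmono : MonotoneOn F (Icc a b) := by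
    apply monotoneOn_of_deriv_nonneg (convex_Icc a b) hFcont
    · intro x hx
      rw [interior_Icc] at hx
      exact (hFderiv x hx).differentiableAt.differentiableWithinAt
    · intro x hx
      rw [interior_Icc] at hx
      rw [(hFderiv x hx).deriv]
      exact hF'nonneg x hx
  have hFb : 0 ≤ F b := by
    have := hFmono (left_mem_Icc.2 hab.le) (right_mem_Icc.2 hab.le) hab.le
    rw [hFa] at this
    exact this
  simp only [hF, hI] at hFb
  have : (1:ℝ) / (b - a) ^ (p - 1) = 1 / c := by rw [hc]
  rw [ge_iff_le, this]
  linarith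
end

section
/- Let a < b be real numbers and t ≥ 3 a real number. If f : ℝ → ℝ is nonnegative and monotone increasing on [a,b], differentiable on [a,b], and satisfies f(x)^{t−2}·f'(x) ≥ (t−2)·f(x)^{t−2}·(x−a)^{t−3} for all x ∈ [a,b], then ∫_a^b f(x)^t dx − (∫_a^b f(x) dx)^{t−1} ≥ f(a)^{t−1} · ∫_a^b f(x) dx. -/
/-!
Write `I x = ∫ u in a..x, f u`. Monotonicity gives `I x ≤ (x - a) f x`, which together with the
hypothesis on `f'` makes `f x ^ (t - 1) - (t - 1) I x ^ (t - 2)` nondecreasing, hence at least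
`f a ^ (t - 1)`. Multiplying by `f x ≥ 0` shows that the difference of the two sides of the
inequality, taken over `[a, x]`, has a nonnegative derivative in `x` and vanishes at `x = a`.
-/

open Real Set intervalIntegral

lemma monotoneOn_Icc_of_hasDerivWithinAt_nonneg {a b : ℝ} {F F' : ℝ → ℝ}
    (hF : ∀ x ∈ Icc a b, HasDerivWithinAt F (F' x) (Icc a b) x)
    (hF' : ∀ x ∈ Icc a b, 0 ≤ F' x) : MonotoneOn F (Icc a b) := by
  refine monotoneOn_of_hasDerivWithinAt_nonneg (f' := F') (convex_Icc a b)
    (fun x hx => (hF x hx).continuousWithinAt) (fun x hx => ?_)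
    (fun x hx => hF' x (interior_subset hx))
  exact (hF x (interior_subset hx)).mono interior_subset

lemma hasDerivWithinAt_integral_Icc {a b x : ℝ} {g : ℝ → ℝ} (hg : ContinuousOn g (Icc a b))
    (hx : x ∈ Icc a b) :
    HasDerivWithinAt (fun u => ∫ y in a..u, g y) (g x) (Icc a b) x :=
  have : Fact (x ∈ Icc a b) := ⟨hx⟩
  integral_hasDerivWithinAt_right
    ((hg.mono (Icc_subset_Icc_right hx.2)).intervalIntegrable_of_Icc hx.1)
    ⟨Icc a b, self_mem_nhdsWithin, hg.aestronglyMeasurable measurableSet_Icc⟩ (hg x hx)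

lemma integral_le_sub_mul_of_monotoneOn {a b : ℝ} {f : ℝ → ℝ} (hab : a ≤ b)
    (hf : MonotoneOn f (Icc a b)) : ∫ x in a..b, f x ≤ (b - a) * f b := by
  have hint : IntervalIntegrable f MeasureTheory.volume a b :=
    (uIcc_of_le hab ▸ hf).intervalIntegrable
  calc ∫ x in a..b, f x ≤ ∫ _ in a..b, f b :=
        integral_mono_on hab hint intervalIntegrable_const
          fun x hx => hf hx (right_mem_Icc.2 hab) hx.2
    _ = (b - a) * f b := by simp

lemma rpow_sub_three_mul_le {t y c d : ℝ} (ht : 3 ≤ t) (hy : 0 ≤ y) (hc : 0 ≤ c) (hd : 0 ≤ d)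
    (hyc : y ≤ d * c) : y ^ (t - 3) * c ≤ c ^ (t - 2) * d ^ (t - 3) := by
  have hsplit : c ^ (t - 2) = c ^ (t - 3) * c := by
    rw [← rpow_add_one' hc (by linarith)]; ring_nf
  calc y ^ (t - 3) * c ≤ (d * c) ^ (t - 3) * c := by gcongr
    _ = c ^ (t - 2) * d ^ (t - 3) := by rw [mul_rpow hd hc, hsplit]; ring

lemma rpow_add_mul_integral_rpow_le {a b t : ℝ} {f f' : ℝ → ℝ} (ht : 3 ≤ t)
    (hnonneg : ∀ x ∈ Icc a b, 0 ≤ f x) (hmono : MonotoneOn f (Icc a b))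
    (hderiv : ∀ x ∈ Icc a b, HasDerivAt f (f' x) x)
    (hf' : ∀ x ∈ Icc a b, (t - 2) * f x ^ (t - 2) * (x - a) ^ (t - 3) ≤ f x ^ (t - 2) * f' x)
    {x : ℝ} (hx : x ∈ Icc a b) :
    f a ^ (t - 1) + (t - 1) * (∫ u in a..x, f u) ^ (t - 2) ≤ f x ^ (t - 1) := by
  set I := fun x => ∫ u in a..x, f u
  have hI : ∀ x ∈ Icc a b, HasDerivWithinAt I (f x) (Icc a b) x :=
    fun x => hasDerivWithinAt_integral_Icc fun y hy => (hderiv y hy).continuousAt.continuousWithinAt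
  have hI_le : ∀ x ∈ Icc a b, I x ≤ (x - a) * f x := fun x hx =>
    integral_le_sub_mul_of_monotoneOn hx.1 (hmono.mono (Icc_subset_Icc_right hx.2))
  have hI_nonneg : ∀ x ∈ Icc a b, 0 ≤ I x := fun x hx =>
    integral_nonneg hx.1 fun u hu => hnonneg u ⟨hu.1, hu.2.trans hx.2⟩
  have hG : ∀ x ∈ Icc a b, HasDerivWithinAt (fun x => f x ^ (t - 1) - (t - 1) * I x ^ (t - 2))
      (f' x * (t - 1) * f x ^ (t - 1 - 1) - (t - 1) * (f x * (t - 2) * I x ^ (t - 2 - 1)))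
      (Icc a b) x := fun x hx =>
    ((hderiv x hx).hasDerivWithinAt.rpow_const (by right; linarith)).sub
      (((hI x hx).rpow_const (by right; linarith)).const_mul _)
  have hG' : ∀ x ∈ Icc a b,
      0 ≤ f' x * (t - 1) * f x ^ (t - 1 - 1) - (t - 1) * (f x * (t - 2) * I x ^ (t - 2 - 1)) := by
    intro x hx
    have key : (t - 2) * (I x ^ (t - 3) * f x) ≤ f x ^ (t - 2) * f' x :=
      calc (t - 2) * (I x ^ (t - 3) * f x) ≤ (t - 2) * (f x ^ (t - 2) * (x - a) ^ (t - 3)) :=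
            mul_le_mul_of_nonneg_left
              (rpow_sub_three_mul_le ht (hI_nonneg x hx) (hnonneg x hx) (sub_nonneg.2 hx.1) (hI_le x hx))
              (by linarith)
        _ = (t - 2) * f x ^ (t - 2) * (x - a) ^ (t - 3) := by ring
        _ ≤ f x ^ (t - 2) * f' x := hf' x hx
    rw [show t - 1 - 1 = t - 2 by ring, show t - 2 - 1 = t - 3 by ring]
    linarith [mul_le_mul_of_nonneg_left key (by linarith : 0 ≤ t - 1)]
  have hGa := monotoneOn_Icc_of_hasDerivWithinAt_nonneg hG hG' ⟨le_rfl, hx.1.trans hx.2⟩ hx hx.1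
  simp only [I, integral_same, zero_rpow (by linarith : t - 2 ≠ 0), mul_zero, sub_zero] at hGa
  linarith

theorem qi_time_scale_real_thm31
    (a b t : ℝ) (hab : a < b) (ht : 3 ≤ t)
    (f f' : ℝ → ℝ)
    (hnonneg : ∀ x ∈ Set.Icc a b, 0 ≤ f x)
    (hmono : MonotoneOn f (Set.Icc a b))
    (hderiv : ∀ x ∈ Set.Icc a b, HasDerivAt f (f' x) x)
    (hf' : ∀ x ∈ Set.Icc a b,
      (t - 2) * f x ^ (t - 2) * (x - a) ^ (t - 3) ≤ f x ^ (t - 2) * f' x) :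
    (∫ x in a..b, f x ^ t) - (∫ x in a..b, f x) ^ (t - 1) ≥
      f a ^ (t - 1) * ∫ x in a..b, f x := by
  have hcont : ContinuousOn f (Icc a b) := fun x hx =>
    (hderiv x hx).continuousAt.continuousWithinAt
  set I := fun x => ∫ u in a..x, f u
  have hF : ∀ x ∈ Icc a b, HasDerivWithinAt
      (fun x => (∫ u in a..x, f u ^ t) - I x ^ (t - 1) - f a ^ (t - 1) * I x)
      (f x ^ t - f x * (t - 1) * I x ^ (t - 1 - 1) - f a ^ (t - 1) * f x) (Icc a b) x :=
    fun x hx =>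
      have hI := hasDerivWithinAt_integral_Icc hcont hx
      ((hasDerivWithinAt_integral_Icc (hcont.rpow_const fun _ _ => by right; linarith) hx).sub
        (hI.rpow_const (by right; linarith))).sub (hI.const_mul _)
  have hF' : ∀ x ∈ Icc a b,
      0 ≤ f x ^ t - f x * (t - 1) * I x ^ (t - 1 - 1) - f a ^ (t - 1) * f x := by
    intro x hx
    have hsplit : f x ^ t = f x ^ (t - 1) * f x := by
      rw [← rpow_add_one' (hnonneg x hx) (by linarith), sub_add_cancel]
    have hG := mul_nonneg (hnonneg x hx) (sub_nonneg.2
      (rpow_add_mul_integral_rpow_le ht hnonneg hmono hderiv hf' hx))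
    rw [hsplit, show t - 1 - 1 = t - 2 by ring]
    linarith
  have hFab := monotoneOn_Icc_of_hasDerivWithinAt_nonneg hF hF'
    (left_mem_Icc.2 hab.le) (right_mem_Icc.2 hab.le) hab.le
  simp only [I, integral_same, zero_rpow (by linarith : t - 1 ≠ 0), mul_zero, sub_zero] at hFab
  linarith
end

section
/- Let a < b be real numbers and p ≥ 1 a real number. If f : ℝ → ℝ is nonnegative and monotone increasing on [a,b], differentiable on [a,b], and satisfies f(x)^p·f'(x) ≥ (p/(b−a)^{p−1})·f(x)^p·(x−a)^{p−1} for all x ∈ [a,b], then ∫_a^b f(x)^{p+2} dx − (1/(b−a)^{p−1})·(∫_a^b f(x) dx)^{p+1} ≥ f(a)^{p+1} · ∫_a^b f(x) dx. -/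
open Real Set intervalIntegral MeasureTheory

theorem qi_time_scale_real_thm32
    (a b p : ℝ) (hab : a < b) (hp : 1 ≤ p)
    (f f' : ℝ → ℝ)
    (hnonneg : ∀ x ∈ Set.Icc a b, 0 ≤ f x)
    (hmono : MonotoneOn f (Set.Icc a b))
    (hderiv : ∀ x ∈ Set.Icc a b, HasDerivAt f (f' x) x)
    (hf' : ∀ x ∈ Set.Icc a b,
      (p / (b - a) ^ (p - 1)) * f x ^ p * (x - a) ^ (p - 1) ≤ f x ^ p * f' x) :
    (∫ x in a..b, f x ^ (p + 2)) -
        (1 / (b - a) ^ (p - 1)) * (∫ x in a..b, f x) ^ (p + 1) ≥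
      f a ^ (p + 1) * ∫ x in a..b, f x := by
  have hab' : a ≤ b := hab.le
  have hp0 : (0:ℝ) < p := lt_of_lt_of_le one_pos hp
  have hba : (0:ℝ) < b - a := sub_pos.2 hab
  have hbap : (0:ℝ) < (b - a) ^ (p - 1) := Real.rpow_pos_of_pos hba _
  have hprc : Continuous (fun x : ℝ => max a (min b x)) :=
    continuous_const.max (continuous_const.min continuous_id)
  have hpr_mem : ∀ x : ℝ, max a (min b x) ∈ Icc a b := fun x =>
    ⟨le_max_left _ _, max_le hab' (min_le_left _ _)⟩
  set g : ℝ → ℝ := fun x => f (max a (min b x)) with hg_def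
  have hg_eq : ∀ x ∈ Icc a b, g x = f x := by
    intro x hx
    simp only [hg_def]
    rw [min_eq_right hx.2, max_eq_right hx.1]
  have hgc : Continuous g := by
    rw [continuous_iff_continuousAt]
    intro x
    exact ContinuousAt.comp (g := f) (f := fun y : ℝ => max a (min b y)) (x := x)
      ((hderiv _ (hpr_mem x)).continuousAt) hprc.continuousAt
  have hg0 : ∀ x, 0 ≤ g x := fun x => hnonneg _ (hpr_mem x)
  -- the primitive of g
  set I : ℝ → ℝ := fun x => ∫ t in a..x, g t with hI_def
  have hIderiv : ∀ x : ℝ, HasDerivAt I (g x) x := fun x =>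
    intervalIntegral.integral_hasDerivAt_right (hgc.intervalIntegrable _ _)
      (hgc.stronglyMeasurableAtFilter _ _) hgc.continuousAt
  have hIc : Continuous I := by
    rw [continuous_iff_continuousAt]; exact fun x => (hIderiv x).continuousAt
  have hIa : I a = 0 := intervalIntegral.integral_same
  have hI0 : ∀ x ∈ Icc a b, 0 ≤ I x := by
    intro x hx
    exact intervalIntegral.integral_nonneg hx.1 (fun t _ => hg0 t)
  have hIle : ∀ x ∈ Icc a b, I x ≤ g x * (x - a) := by
    intro x hx
    have h1 : I x ≤ ∫ _ in a..x, g x := by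
      apply intervalIntegral.integral_mono_on hx.1
        (hgc.intervalIntegrable _ _) (intervalIntegrable_const)
      intro t ht
      have htm : t ∈ Icc a b := ⟨ht.1, le_trans ht.2 hx.2⟩
      rw [hg_eq t htm, hg_eq x hx]
      exact hmono htm hx ht.2
    calc I x ≤ ∫ _ in a..x, g x := h1
    _ = (x - a) * g x := by rw [intervalIntegral.integral_const]; simp [smul_eq_mul]
    _ = g x * (x - a) := mul_comm _ _
  have hrpowc : ∀ q : ℝ, 0 ≤ q → Continuous (fun t : ℝ => t ^ q) := fun q hq =>
    Real.continuous_rpow_const hq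
  -- the function G
  set G : ℝ → ℝ := fun x => g x ^ (p + 1) - ((p + 1) / (b - a) ^ (p - 1)) * I x ^ p
      - f a ^ (p + 1) with hG_def
  have hGc : Continuous G := by
    apply Continuous.sub
    · exact ((hrpowc (p+1) (by linarith)).comp hgc).sub
        (continuous_const.mul ((hrpowc p hp0.le).comp hIc))
    · exact continuous_const
  have hGa : G a = 0 := by
    simp only [hG_def, hIa, Real.zero_rpow hp0.ne', mul_zero, sub_zero,
      hg_eq a ⟨le_refl a, hab'⟩, sub_self]
  -- derivative of G on the interior
  have hGderiv : ∀ x ∈ Ioo a b, HasDerivAt G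
      (f' x * (p + 1) * g x ^ (p + 1 - 1)
        - ((p + 1) / (b - a) ^ (p - 1)) * (g x * p * I x ^ (p - 1))) x := by
    intro x hx
    have hxm : x ∈ Icc a b := Ioo_subset_Icc_self hx
    have hgf : g =ᶠ[nhds x] f :=
      Filter.eventuallyEq_of_mem (isOpen_Ioo.mem_nhds hx)
        (fun y hy => hg_eq y (Ioo_subset_Icc_self hy))
    have hgd : HasDerivAt g (f' x) x := (hderiv x hxm).congr_of_eventuallyEq hgf
    have h1 : HasDerivAt (fun y => g y ^ (p + 1))
        (f' x * (p + 1) * g x ^ (p + 1 - 1)) x :=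
      hgd.rpow_const (Or.inr (by linarith))
    have h2 : HasDerivAt (fun y => I y ^ p) (g x * p * I x ^ (p - 1)) x :=
      (hIderiv x).rpow_const (Or.inr hp)
    exact (h1.sub ((h2.const_mul _))).sub_const _
  have hGd_nonneg : ∀ x ∈ Ioo a b,
      0 ≤ f' x * (p + 1) * g x ^ (p + 1 - 1)
        - ((p + 1) / (b - a) ^ (p - 1)) * (g x * p * I x ^ (p - 1)) := by
    intro x hx
    have hxm : x ∈ Icc a b := Ioo_subset_Icc_self hx
    rcases eq_or_lt_of_le (hg0 x) with hzero | hpos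
    · have h1 : g x ^ (p + 1 - 1) = 0 := by
        rw [← hzero]
        exact Real.zero_rpow (by intro h; exact hp0.ne' (by linarith))
      rw [h1, ← hzero]
      ring_nf
      try norm_num
    · -- g x > 0
      have hxa : (0:ℝ) ≤ x - a := by linarith [hx.1]
      have key : (p / (b - a) ^ (p - 1)) * I x ^ (p - 1) * g x ≤ g x ^ p * f' x := by
        have hIrle : I x ^ (p - 1) ≤ g x ^ (p - 1) * (x - a) ^ (p - 1) := by
          rw [← Real.mul_rpow (hg0 x) hxa]
          exact Real.rpow_le_rpow (hI0 x hxm) (hIle x hxm) (by linarith)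
        have hc : (0:ℝ) ≤ p / (b - a) ^ (p - 1) := by positivity
        calc (p / (b - a) ^ (p - 1)) * I x ^ (p - 1) * g x
            ≤ (p / (b - a) ^ (p - 1)) * (g x ^ (p - 1) * (x - a) ^ (p - 1)) * g x := by
              apply mul_le_mul_of_nonneg_right _ (hg0 x)
              exact mul_le_mul_of_nonneg_left hIrle hc
          _ = (p / (b - a) ^ (p - 1)) * (g x ^ (p - 1) * g x) * (x - a) ^ (p - 1) := by ring
          _ = (p / (b - a) ^ (p - 1)) * g x ^ p * (x - a) ^ (p - 1) := by
              rw [← Real.rpow_add_one hpos.ne' (p - 1)]; ring_nf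
          _ ≤ g x ^ p * f' x := by
              have := hf' x hxm
              rwa [← hg_eq x hxm] at this
      have hpp : p + 1 - 1 = p := by ring
      rw [hpp]
      have h2 : ((p + 1) / (b - a) ^ (p - 1)) * (g x * p * I x ^ (p - 1))
          = (p + 1) * ((p / (b - a) ^ (p - 1)) * I x ^ (p - 1) * g x) := by
        rw [div_eq_mul_inv, div_eq_mul_inv]; ring
      have h3 : f' x * (p + 1) * g x ^ p = (p + 1) * (g x ^ p * f' x) := by ring
      rw [h2, h3, ← mul_sub]
      have : (0:ℝ) ≤ p + 1 := by linarith
      apply mul_nonneg this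
      linarith [key]
  have hGmono : MonotoneOn G (Icc a b) := by
    apply monotoneOn_of_deriv_nonneg (convex_Icc a b) hGc.continuousOn
    · rw [interior_Icc]
      exact fun x hx => (hGderiv x hx).differentiableAt.differentiableWithinAt
    · rw [interior_Icc]
      intro x hx
      rw [(hGderiv x hx).deriv]
      exact hGd_nonneg x hx
  have hGnn : ∀ x ∈ Icc a b, 0 ≤ G x := by
    intro x hx
    have := hGmono ⟨le_refl a, hab'⟩ hx hx.1
    rwa [hGa] at this
  -- the function H
  have hg2c : Continuous (fun t => g t ^ (p + 2)) := (hrpowc (p+2) (by linarith)).comp hgc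
  set J : ℝ → ℝ := fun x => ∫ t in a..x, g t ^ (p + 2) with hJ_def
  have hJderiv : ∀ x : ℝ, HasDerivAt J (g x ^ (p + 2)) x := fun x =>
    intervalIntegral.integral_hasDerivAt_right (hg2c.intervalIntegrable _ _)
      (hg2c.stronglyMeasurableAtFilter _ _) hg2c.continuousAt
  have hJc : Continuous J := by
    rw [continuous_iff_continuousAt]; exact fun x => (hJderiv x).continuousAt
  set H : ℝ → ℝ := fun x => J x - (1 / (b - a) ^ (p - 1)) * I x ^ (p + 1)
      - f a ^ (p + 1) * I x with hH_def
  have hHc : Continuous H :=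
    (hJc.sub (continuous_const.mul ((hrpowc (p+1) (by linarith)).comp hIc))).sub
      (continuous_const.mul hIc)
  have hHa : H a = 0 := by
    simp [hH_def, hIa, hJ_def, Real.zero_rpow (show p + 1 ≠ 0 by positivity)]
  have hHderiv : ∀ x ∈ Ioo a b, HasDerivAt H
      (g x ^ (p + 2) - (1 / (b - a) ^ (p - 1)) * (g x * (p + 1) * I x ^ (p + 1 - 1))
        - f a ^ (p + 1) * g x) x := by
    intro x hx
    have h2 : HasDerivAt (fun y => I y ^ (p + 1))
        (g x * (p + 1) * I x ^ (p + 1 - 1)) x :=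
      (hIderiv x).rpow_const (Or.inr (by linarith))
    exact ((hJderiv x).sub (h2.const_mul _)).sub ((hIderiv x).const_mul _)
  have hHd_nonneg : ∀ x ∈ Ioo a b,
      0 ≤ g x ^ (p + 2) - (1 / (b - a) ^ (p - 1)) * (g x * (p + 1) * I x ^ (p + 1 - 1))
        - f a ^ (p + 1) * g x := by
    intro x hx
    have hxm : x ∈ Icc a b := Ioo_subset_Icc_self hx
    rcases eq_or_lt_of_le (hg0 x) with hzero | hpos
    · rw [← hzero]
      rw [show (0:ℝ) ^ (p + 2) = 0 from Real.zero_rpow (by positivity)]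
      ring_nf
      try norm_num
    · have h1 : g x ^ (p + 2) = g x * g x ^ (p + 1) := by
        rw [show p + 2 = (p + 1) + 1 by ring, Real.rpow_add_one hpos.ne']
        ring
      have h2 : p + 1 - 1 = p := by ring
      have key2 : (0:ℝ) ≤ g x * G x := mul_nonneg (hg0 x) (hGnn x hxm)
      have expand : g x * G x = g x * g x ^ (p + 1)
          - 1 / (b - a) ^ (p - 1) * (g x * (p + 1) * I x ^ p) - f a ^ (p + 1) * g x := by
        simp only [hG_def]
        rw [div_eq_mul_inv, div_eq_mul_inv]
        ring
      rw [h1, h2, ← expand]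
      exact key2
  have hHmono : MonotoneOn H (Icc a b) := by
    apply monotoneOn_of_deriv_nonneg (convex_Icc a b) hHc.continuousOn
    · rw [interior_Icc]
      exact fun x hx => (hHderiv x hx).differentiableAt.differentiableWithinAt
    · rw [interior_Icc]
      intro x hx
      rw [(hHderiv x hx).deriv]
      exact hHd_nonneg x hx
  have hHb : 0 ≤ H b := by
    have := hHmono ⟨le_refl a, hab'⟩ ⟨hab', le_refl b⟩ hab'
    rwa [hHa] at this
  -- translate back
  have e1 : (∫ x in a..b, f x) = I b := by
    apply intervalIntegral.integral_congr
    intro t ht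
    rw [uIcc_of_le hab'] at ht
    exact (hg_eq t ht).symm
  have e2 : (∫ x in a..b, f x ^ (p + 2)) = J b := by
    apply intervalIntegral.integral_congr
    intro t ht
    rw [uIcc_of_le hab'] at ht
    show f t ^ (p + 2) = g t ^ (p + 2)
    rw [hg_eq t ht]
  rw [ge_iff_le, ← sub_nonneg, e1, e2]
  exact hHb
end

section
/- Let a < b be real numbers and p ≥ 3 a real number. If f : ℝ → ℝ is nonnegative and monotone increasing on [a,b], differentiable on [a,b], and satisfies f(x)^{p−3}·f'(x) ≥ (p−2)·f(x)^{p−3}·(x−a)^{p−3} for all x ∈ [a,b], then ∫_a^b f(x)^p dx − (∫_a^b f(x) dx)^{p−1} ≥ f(a)^{p−1} · ∫_a^b f(x) dx. -/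
open Real Set intervalIntegral

theorem qi_time_scale_real_thm33
    (a b p : ℝ) (hab : a < b) (hp : 3 ≤ p)
    (f f' : ℝ → ℝ)
    (hnonneg : ∀ x ∈ Set.Icc a b, 0 ≤ f x)
    (hmono : MonotoneOn f (Set.Icc a b))
    (hderiv : ∀ x ∈ Set.Icc a b, HasDerivAt f (f' x) x)
    (hf' : ∀ x ∈ Set.Icc a b,
      (p - 2) * f x ^ (p - 3) * (x - a) ^ (p - 3) ≤ f x ^ (p - 3) * f' x) :
    (∫ x in a..b, f x ^ p) - (∫ x in a..b, f x) ^ (p - 1) ≥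
      f a ^ (p - 1) * ∫ x in a..b, f x := by
  have hab' : a ≤ b := hab.le
  have hp1 : (1:ℝ) ≤ p - 1 := by linarith
  have hp2 : (1:ℝ) ≤ p - 2 := by linarith
  have hp3 : (0:ℝ) ≤ p - 3 := by linarith
  have hp2ne : p - 2 ≠ 0 := by intro h; linarith [h]
  have hp1ne : p - 1 ≠ 0 := by intro h; linarith [h]
  have hcontAt : ∀ x ∈ Icc a b, ContinuousAt f x := fun x hx => (hderiv x hx).continuousAt
  have hfc : ContinuousOn f (Icc a b) := fun x hx => (hcontAt x hx).continuousWithinAt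
  have hfpc : ContinuousOn (fun x => f x ^ p) (Icc a b) :=
    hfc.rpow_const (fun x _ => Or.inr (by linarith))
  have hfint : ∀ t ∈ Icc a b, IntervalIntegrable f MeasureTheory.volume a t := fun t ht =>
    (hfc.mono (Icc_subset_Icc le_rfl ht.2)).intervalIntegrable_of_Icc ht.1
  have hfpint : ∀ t ∈ Icc a b, IntervalIntegrable (fun x => f x ^ p) MeasureTheory.volume a t :=
    fun t ht => (hfpc.mono (Icc_subset_Icc le_rfl ht.2)).intervalIntegrable_of_Icc ht.1
  set I : ℝ → ℝ := fun t => ∫ x in a..t, f x with hIdef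
  have hIa : I a = 0 := integral_same
  have hInonneg : ∀ t ∈ Icc a b, 0 ≤ I t := fun t ht =>
    intervalIntegral.integral_nonneg ht.1 (fun u hu => hnonneg u ⟨hu.1, hu.2.trans ht.2⟩)
  have hIle : ∀ t ∈ Icc a b, I t ≤ f t * (t - a) := by
    intro t ht
    have h1 : I t ≤ ∫ _x in a..t, f t :=
      intervalIntegral.integral_mono_on ht.1 (hfint t ht) intervalIntegrable_const
        (fun x hx => hmono ⟨hx.1, hx.2.trans ht.2⟩ ht hx.2)
    have h2 : (∫ _x in a..t, f t) = f t * (t - a) := by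
      rw [intervalIntegral.integral_const]; rw [smul_eq_mul]; ring
    linarith [h1, h2.le, h2.ge]
  have hIderiv : ∀ t ∈ Ioo a b, HasDerivAt I (f t) t := by
    intro t ht
    exact intervalIntegral.integral_hasDerivAt_right (hfint t (Ioo_subset_Icc_self ht))
      ((hfc.mono Ioo_subset_Icc_self).stronglyMeasurableAtFilter isOpen_Ioo t ht)
      (hcontAt t (Ioo_subset_Icc_self ht))
  have hIcont : ContinuousOn I (Icc a b) := by
    have h := intervalIntegral.continuousOn_primitive_interval
      (μ := MeasureTheory.volume) (a := a) (b := b) (f := f) ?_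
    · rwa [uIcc_of_le hab'] at h
    · rw [uIcc_of_le hab']; exact hfc.integrableOn_Icc
  -- Step A : the auxiliary inequality  (p-1) I^{p-2} ≤ f^{p-1} - f a^{p-1}
  have hGnonneg : ∀ t ∈ Icc a b,
      0 ≤ f t ^ (p-1) - f a ^ (p-1) - (p-1) * I t ^ (p-2) := by
    have hGmono : MonotoneOn
        (fun t => f t ^ (p-1) - f a ^ (p-1) - (p-1) * I t ^ (p-2)) (Icc a b) := by
      have hGderiv : ∀ t ∈ Ioo a b, HasDerivAt
          (fun t => f t ^ (p-1) - f a ^ (p-1) - (p-1) * I t ^ (p-2))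
          (f' t * (p-1) * f t ^ (p-1-1) - (p-1) * (f t * (p-2) * I t ^ (p-2-1))) t := by
        intro t ht
        have ht' : t ∈ Icc a b := Ioo_subset_Icc_self ht
        have h1 : HasDerivAt (fun u => f u ^ (p-1)) (f' t * (p-1) * f t ^ (p-1-1)) t :=
          (hderiv t ht').rpow_const (Or.inr hp1)
        have h2 : HasDerivAt (fun u => I u ^ (p-2)) (f t * (p-2) * I t ^ (p-2-1)) t :=
          (hIderiv t ht).rpow_const (Or.inr hp2)
        exact (h1.sub_const (f a ^ (p-1))).sub (h2.const_mul (p-1))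
      have hG'nonneg : ∀ t ∈ Ioo a b,
          0 ≤ f' t * (p-1) * f t ^ (p-1-1) - (p-1) * (f t * (p-2) * I t ^ (p-2-1)) := by
        intro t ht
        have ht' : t ∈ Icc a b := Ioo_subset_Icc_self ht
        have hft : 0 ≤ f t := hnonneg t ht'
        rw [show p-1-1 = p-2 by ring, show p-2-1 = p-3 by ring]
        rcases eq_or_lt_of_le hft with h0 | hpos
        · rw [← h0]
          simp [Real.zero_rpow hp2ne]
        · have hta : (0:ℝ) ≤ t - a := by linarith [ht.1]
          have h1 : I t ^ (p-3) ≤ f t ^ (p-3) * (t-a) ^ (p-3) := by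
            rw [← Real.mul_rpow hft hta]
            exact Real.rpow_le_rpow (hInonneg t ht') (hIle t ht') hp3
          have key : (p-2) * (I t ^ (p-3) * f t) ≤ f t ^ (p-2) * f' t := by
            calc (p-2) * (I t ^ (p-3) * f t)
                ≤ (p-2) * (f t ^ (p-3) * (t-a) ^ (p-3) * f t) := by
                  apply mul_le_mul_of_nonneg_left _ (by linarith)
                  exact mul_le_mul_of_nonneg_right h1 hft
              _ = ((p-2) * f t ^ (p-3) * (t-a) ^ (p-3)) * f t := by ring
              _ ≤ (f t ^ (p-3) * f' t) * f t :=
                  mul_le_mul_of_nonneg_right (hf' t ht') hft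
              _ = f t ^ (p-3) * (f t ^ (1:ℝ)) * f' t := by rw [Real.rpow_one]; ring
              _ = f t ^ (p-2) * f' t := by
                  rw [← Real.rpow_add hpos, show p-3+1 = p-2 by ring]
          nlinarith [mul_le_mul_of_nonneg_left key (show (0:ℝ) ≤ p-1 by linarith)]
      apply monotoneOn_of_deriv_nonneg (convex_Icc a b)
      · exact ((hfc.rpow_const (fun x _ => Or.inr (by linarith))).sub
          continuousOn_const).sub
          (continuousOn_const.mul (hIcont.rpow_const (fun x _ => Or.inr (by linarith))))
      · intro t ht
        rw [interior_Icc] at ht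
        exact (hGderiv t ht).differentiableAt.differentiableWithinAt
      · intro t ht
        rw [interior_Icc] at ht
        rw [(hGderiv t ht).deriv]
        exact hG'nonneg t ht
    intro t ht
    have hGa : f a ^ (p-1) - f a ^ (p-1) - (p-1) * I a ^ (p-2) = 0 := by
      rw [hIa, Real.zero_rpow hp2ne]; ring
    have h2 := hGmono (left_mem_Icc.2 hab') ht ht.1
    simp only at h2
    rw [hGa] at h2
    exact h2
  -- Step B : main function F
  set J : ℝ → ℝ := fun t => ∫ x in a..t, f x ^ p with hJdef
  have hJderiv : ∀ t ∈ Ioo a b, HasDerivAt J (f t ^ p) t := by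
    intro t ht
    exact intervalIntegral.integral_hasDerivAt_right (hfpint t (Ioo_subset_Icc_self ht))
      ((hfpc.mono Ioo_subset_Icc_self).stronglyMeasurableAtFilter isOpen_Ioo t ht)
      ((hcontAt t (Ioo_subset_Icc_self ht)).rpow_const (Or.inr (by linarith)))
  have hJcont : ContinuousOn J (Icc a b) := by
    have h := intervalIntegral.continuousOn_primitive_interval
      (μ := MeasureTheory.volume) (a := a) (b := b) (f := fun x => f x ^ p) ?_
    · rwa [uIcc_of_le hab'] at h
    · rw [uIcc_of_le hab']; exact hfpc.integrableOn_Icc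
  have hFmono : MonotoneOn
      (fun t => J t - I t ^ (p-1) - f a ^ (p-1) * I t) (Icc a b) := by
    have hFderiv : ∀ t ∈ Ioo a b, HasDerivAt
        (fun t => J t - I t ^ (p-1) - f a ^ (p-1) * I t)
        (f t ^ p - f t * (p-1) * I t ^ (p-1-1) - f a ^ (p-1) * f t) t := by
      intro t ht
      have h2 : HasDerivAt (fun u => I u ^ (p-1)) (f t * (p-1) * I t ^ (p-1-1)) t :=
        (hIderiv t ht).rpow_const (Or.inr hp1)
      exact ((hJderiv t ht).sub h2).sub ((hIderiv t ht).const_mul (f a ^ (p-1)))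
    have hF'nonneg : ∀ t ∈ Ioo a b,
        0 ≤ f t ^ p - f t * (p-1) * I t ^ (p-1-1) - f a ^ (p-1) * f t := by
      intro t ht
      have ht' : t ∈ Icc a b := Ioo_subset_Icc_self ht
      have hft : 0 ≤ f t := hnonneg t ht'
      rw [show p-1-1 = p-2 by ring]
      rcases eq_or_lt_of_le hft with h0 | hpos
      · have hfa : f a = 0 := le_antisymm (h0 ▸ hmono (left_mem_Icc.2 hab') ht' ht'.1)
          (hnonneg a (left_mem_Icc.2 hab'))
        rw [← h0, hfa]
        simp [Real.zero_rpow (show p ≠ 0 by intro h; linarith [h]),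
          Real.zero_rpow hp1ne]
      · have hfp : f t ^ p = f t ^ (p-1) * f t := by
          have h := Real.rpow_add_one hpos.ne' (p-1)
          rwa [show p-1+1 = p by ring] at h
        have hGt := hGnonneg t ht'
        have h0 : 0 ≤ f t * (f t ^ (p-1) - f a ^ (p-1) - (p-1) * I t ^ (p-2)) :=
          mul_nonneg hft hGt
        rw [hfp]
        nlinarith [h0]
    apply monotoneOn_of_deriv_nonneg (convex_Icc a b)
    · exact ((hJcont.sub (hIcont.rpow_const (fun x _ => Or.inr (by linarith)))).sub
        (continuousOn_const.mul hIcont))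
    · intro t ht
      rw [interior_Icc] at ht
      exact (hFderiv t ht).differentiableAt.differentiableWithinAt
    · intro t ht
      rw [interior_Icc] at ht
      rw [(hFderiv t ht).deriv]
      exact hF'nonneg t ht
  have hFa : J a - I a ^ (p-1) - f a ^ (p-1) * I a = 0 := by
    have : J a = 0 := integral_same
    rw [this, hIa, Real.zero_rpow hp1ne]; ring
  have hFb := hFmono (left_mem_Icc.2 hab') (right_mem_Icc.2 hab') hab'
  simp only at hFb
  rw [hFa] at hFb
  have hJb : J b = ∫ x in a..b, f x ^ p := rfl
  have hIb : I b = ∫ x in a..b, f x := rfl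
  rw [ge_iff_le, ← sub_nonneg]
  rw [hJb, hIb] at hFb
  linarith [hFb]
end

section
/- Let a < b be real numbers and p ≥ 3 a real number. If f : ℝ → ℝ is nonnegative and monotone increasing on [a,b], differentiable on [a,b], and satisfies f'(x) ≥ (p−2)·(x−a)^{p−3} for all x ∈ [a,b], then ∫_a^b f(x)^p dx − (∫_a^b f(x) dx)^{p−1} ≥ f(a)^{p−1} · ∫_a^b f(x) dx. -/
open Real Set intervalIntegral

theorem qi_time_scale_real_thm35
    (a b p : ℝ) (hab : a < b) (hp : 3 ≤ p)
    (f f' : ℝ → ℝ)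
    (hnonneg : ∀ x ∈ Set.Icc a b, 0 ≤ f x)
    (hmono : MonotoneOn f (Set.Icc a b))
    (hderiv : ∀ x ∈ Set.Icc a b, HasDerivAt f (f' x) x)
    (hf' : ∀ x ∈ Set.Icc a b, (p - 2) * (x - a) ^ (p - 3) ≤ f' x) :
    (∫ x in a..b, f x ^ p) - (∫ x in a..b, f x) ^ (p - 1) ≥
      f a ^ (p - 1) * ∫ x in a..b, f x := by
  have hp2 : (1:ℝ) ≤ p - 2 := by linarith
  have hp1 : (1:ℝ) ≤ p - 1 := by linarith
  have hp3 : (0:ℝ) ≤ p - 3 := by linarith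
  have hp2ne : p - 2 ≠ 0 := by positivity
  have hp1ne : p - 1 ≠ 0 := by positivity
  have hpne : p ≠ 0 := by positivity
  -- continuity of f on [a,b]
  have hcf : ContinuousOn f (Icc a b) := fun x hx =>
    (hderiv x hx).continuousAt.continuousWithinAt
  set F : ℝ → ℝ := fun x => ∫ t in a..x, f t with hFdef
  set G : ℝ → ℝ := fun x => ∫ t in a..x, f t ^ p with hGdef
  set q : ℝ → ℝ := fun t => f t ^ p with hqdef
  have hcq : ContinuousOn q (Icc a b) := hcf.rpow_const (fun x hx => Or.inr (by linarith))
  -- integrability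
  have hintf : ∀ x ∈ Icc a b, IntervalIntegrable f MeasureTheory.volume a x := by
    intro x hx
    apply ContinuousOn.intervalIntegrable
    rw [uIcc_of_le hx.1]
    exact hcf.mono (Icc_subset_Icc le_rfl hx.2)
  have hintq : ∀ x ∈ Icc a b, IntervalIntegrable q MeasureTheory.volume a x := by
    intro x hx
    apply ContinuousOn.intervalIntegrable
    rw [uIcc_of_le hx.1]
    exact hcq.mono (Icc_subset_Icc le_rfl hx.2)
  -- continuity of primitives
  have hFc : ContinuousOn F (Icc a b) := by
    have := intervalIntegral.continuousOn_primitive_interval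
      (f := f) (μ := MeasureTheory.volume) (a := a) (b := b) ?_
    · rwa [uIcc_of_le hab.le] at this
    · rw [uIcc_of_le hab.le]; exact hcf.integrableOn_Icc
  have hGc : ContinuousOn G (Icc a b) := by
    have := intervalIntegral.continuousOn_primitive_interval
      (f := q) (μ := MeasureTheory.volume) (a := a) (b := b) ?_
    · rwa [uIcc_of_le hab.le] at this
    · rw [uIcc_of_le hab.le]; exact hcq.integrableOn_Icc
  -- derivatives of primitives on the interior
  have hFd : ∀ x ∈ Ioo a b, HasDerivAt F (f x) x := by
    intro x hx
    have hmem : x ∈ Icc a b := Ioo_subset_Icc_self hx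
    exact intervalIntegral.integral_hasDerivAt_right (hintf x hmem)
      (ContinuousAt.stronglyMeasurableAtFilter isOpen_Ioo
        (fun y hy => (hderiv y (Ioo_subset_Icc_self hy)).continuousAt) x hx)
      (hderiv x hmem).continuousAt
  have hGd : ∀ x ∈ Ioo a b, HasDerivAt G (q x) x := by
    intro x hx
    have hmem : x ∈ Icc a b := Ioo_subset_Icc_self hx
    exact intervalIntegral.integral_hasDerivAt_right (hintq x hmem)
      (ContinuousAt.stronglyMeasurableAtFilter isOpen_Ioo
        (fun y hy => ((hderiv y (Ioo_subset_Icc_self hy)).continuousAt.rpow_const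
          (Or.inr (by linarith)))) x hx)
      ((hderiv x hmem).continuousAt.rpow_const (Or.inr (by linarith)))
  -- F is nonnegative and bounded by (x-a) * f x
  have hFnn : ∀ x ∈ Icc a b, 0 ≤ F x := by
    intro x hx
    exact intervalIntegral.integral_nonneg hx.1
      (fun t ht => hnonneg t ⟨ht.1, le_trans ht.2 hx.2⟩)
  have hFle : ∀ x ∈ Icc a b, F x ≤ (x - a) * f x := by
    intro x hx
    have : F x ≤ ∫ _ in a..x, f x :=
      intervalIntegral.integral_mono_on hx.1 (hintf x hx) intervalIntegrable_const
        (fun t ht => hmono ⟨ht.1, le_trans ht.2 hx.2⟩ hx ht.2)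
    simpa [smul_eq_mul] using this
  have hFa : F a = 0 := intervalIntegral.integral_same
  -- auxiliary function h
  set h : ℝ → ℝ := fun x => f x ^ (p - 1) - (p - 1) * F x ^ (p - 2) - f a ^ (p - 1)
    with hhdef
  have hhc : ContinuousOn h (Icc a b) := by
    apply ContinuousOn.sub
    apply ContinuousOn.sub
    · exact hcf.rpow_const (fun x hx => Or.inr (by linarith))
    · exact continuousOn_const.mul (hFc.rpow_const (fun x hx => Or.inr (by linarith)))
    · exact continuousOn_const
  have hha : h a = 0 := by
    simp [hhdef, hFa, Real.zero_rpow hp2ne]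
  have hhd : ∀ x ∈ Ioo a b,
      HasDerivAt h (f' x * (p - 1) * f x ^ (p - 2)
        - (p - 1) * (f x * (p - 2) * F x ^ (p - 3))) x := by
    intro x hx
    have hmem : x ∈ Icc a b := Ioo_subset_Icc_self hx
    have d1 : HasDerivAt (fun y => f y ^ (p - 1)) (f' x * (p - 1) * f x ^ (p - 1 - 1)) x :=
      (hderiv x hmem).rpow_const (Or.inr hp1)
    have d2 : HasDerivAt (fun y => F y ^ (p - 2)) (f x * (p - 2) * F x ^ (p - 2 - 1)) x :=
      (hFd x hx).rpow_const (Or.inr hp2)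
    have e1 : p - 1 - 1 = p - 2 := by ring
    have e2 : p - 2 - 1 = p - 3 := by ring
    rw [e1] at d1; rw [e2] at d2
    exact ((d1.sub (d2.const_mul (p - 1))).sub_const _)
  have hhd_nonneg : ∀ x ∈ Ioo a b,
      0 ≤ f' x * (p - 1) * f x ^ (p - 2)
        - (p - 1) * (f x * (p - 2) * F x ^ (p - 3)) := by
    intro x hx
    have hmem : x ∈ Icc a b := Ioo_subset_Icc_self hx
    have hfx : 0 ≤ f x := hnonneg x hmem
    rcases eq_or_lt_of_le hfx with hz | hpos
    · simp [← hz, Real.zero_rpow hp2ne]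
    · have hxa : 0 ≤ x - a := by linarith [hx.1]
      have h1 : F x ^ (p - 3) ≤ (x - a) ^ (p - 3) * f x ^ (p - 3) := by
        calc F x ^ (p - 3) ≤ ((x - a) * f x) ^ (p - 3) :=
              Real.rpow_le_rpow (hFnn x hmem) (hFle x hmem) hp3
          _ = (x - a) ^ (p - 3) * f x ^ (p - 3) := Real.mul_rpow hxa hfx
      have h2 : f x ^ (p - 3) * f x = f x ^ (p - 2) := by
        rw [← Real.rpow_add_one (ne_of_gt hpos) (p - 3)]
        congr 1; ring
      have h3 : (p - 2) * (x - a) ^ (p - 3) ≤ f' x := hf' x hmem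
      have hpow1 : (0:ℝ) ≤ f x ^ (p - 2) := Real.rpow_nonneg hfx _
      have hpow2 : (0:ℝ) ≤ (x - a) ^ (p - 3) := Real.rpow_nonneg hxa _
      have hpow3 : (0:ℝ) ≤ f x ^ (p - 3) := Real.rpow_nonneg hfx _
      have key : f x * (p - 2) * F x ^ (p - 3) ≤ f' x * f x ^ (p - 2) := by
        calc f x * (p - 2) * F x ^ (p - 3)
            ≤ f x * (p - 2) * ((x - a) ^ (p - 3) * f x ^ (p - 3)) := by
              apply mul_le_mul_of_nonneg_left h1
              positivity
          _ = (p - 2) * (x - a) ^ (p - 3) * (f x ^ (p - 3) * f x) := by ring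
          _ = (p - 2) * (x - a) ^ (p - 3) * f x ^ (p - 2) := by rw [h2]
          _ ≤ f' x * f x ^ (p - 2) := mul_le_mul_of_nonneg_right h3 hpow1
      nlinarith [key]
  have hhmono : MonotoneOn h (Icc a b) := by
    apply monotoneOn_of_deriv_nonneg (convex_Icc a b) hhc
    · intro x hx
      rw [interior_Icc] at hx
      exact (hhd x hx).differentiableAt.differentiableWithinAt
    · intro x hx
      rw [interior_Icc] at hx
      rw [(hhd x hx).deriv]
      exact hhd_nonneg x hx
  have hhnn : ∀ x ∈ Icc a b, 0 ≤ h x := by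
    intro x hx
    have := hhmono (left_mem_Icc.mpr hab.le) hx hx.1
    rwa [hha] at this
  -- main auxiliary function g
  set g : ℝ → ℝ := fun x => G x - F x ^ (p - 1) - f a ^ (p - 1) * F x with hgdef
  have hgc : ContinuousOn g (Icc a b) := by
    apply ContinuousOn.sub
    apply ContinuousOn.sub
    · exact hGc
    · exact hFc.rpow_const (fun x hx => Or.inr (by linarith))
    · exact continuousOn_const.mul hFc
  have hga : g a = 0 := by
    simp [hgdef, hFa, hGdef, Real.zero_rpow hp1ne]
  have hgd : ∀ x ∈ Ioo a b,
      HasDerivAt g (q x - f x * (p - 1) * F x ^ (p - 2) - f a ^ (p - 1) * f x) x := by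
    intro x hx
    have d2 : HasDerivAt (fun y => F y ^ (p - 1)) (f x * (p - 1) * F x ^ (p - 1 - 1)) x :=
      (hFd x hx).rpow_const (Or.inr hp1)
    have e1 : p - 1 - 1 = p - 2 := by ring
    rw [e1] at d2
    exact ((hGd x hx).sub d2).sub ((hFd x hx).const_mul _)
  have hgd_nonneg : ∀ x ∈ Ioo a b,
      0 ≤ q x - f x * (p - 1) * F x ^ (p - 2) - f a ^ (p - 1) * f x := by
    intro x hx
    have hmem : x ∈ Icc a b := Ioo_subset_Icc_self hx
    have hfx : 0 ≤ f x := hnonneg x hmem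
    rcases eq_or_lt_of_le hfx with hz | hpos
    · simp [hqdef, ← hz, Real.zero_rpow hpne]
    · have hq : q x = f x ^ (p - 1) * f x := by
        rw [hqdef]
        rw [← Real.rpow_add_one (ne_of_gt hpos) (p - 1)]
        ring_nf
      have hhx := hhnn x hmem
      rw [hhdef] at hhx
      have : q x - f x * (p - 1) * F x ^ (p - 2) - f a ^ (p - 1) * f x
          = f x * (f x ^ (p - 1) - (p - 1) * F x ^ (p - 2) - f a ^ (p - 1)) := by
        rw [hq]; ring
      rw [this]
      exact mul_nonneg hfx hhx
  have hgmono : MonotoneOn g (Icc a b) := by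
    apply monotoneOn_of_deriv_nonneg (convex_Icc a b) hgc
    · intro x hx
      rw [interior_Icc] at hx
      exact (hgd x hx).differentiableAt.differentiableWithinAt
    · intro x hx
      rw [interior_Icc] at hx
      rw [(hgd x hx).deriv]
      exact hgd_nonneg x hx
  have hgb : 0 ≤ g b := by
    have := hgmono (left_mem_Icc.mpr hab.le) (right_mem_Icc.mpr hab.le) hab.le
    rwa [hga] at this
  have : g b = (∫ x in a..b, f x ^ p) - (∫ x in a..b, f x) ^ (p - 1)
      - f a ^ (p - 1) * ∫ x in a..b, f x := rfl
  rw [this] at hgb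
  linarith
end

section
/- Let h > 0 be a real number, N ≥ 1 a natural number, and t ≥ 3 a real number. Let u : ℕ → ℝ satisfy u_k ≥ 0 and u_k ≤ u_{k+1} for all k. If for every k with 0 ≤ k ≤ N−1 one has u_k^{t−2}·(u_{k+1} − u_k)/h ≥ (t−2)·u_{k+2}^{t−2}·((k+2)·h)^{t−3}, then h·Σ_{k=0}^{N−1} u_k^t − (h·Σ_{k=0}^{N−1} u_k)^{t−1} ≥ u_0^{t−2}·(u_0 − (t−1)·h^{t−2}) · h·Σ_{k=0}^{N−1} u_k. -/
/-!
Write `S m = h * ∑ k < m, u k` for the delta integral up to `a + m h`. The increment of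
`S ^ (t - 2)` from `m + 1` to `m + 2` is at most `(t - 2) S(m+2)^(t-3) h u(m+1)` by convexity, and
`S(m+2) ≤ (m+2) h u(m+2)` by monotonicity; so the hypothesis at `m`, together with convexity of
`x ^ (t - 1)`, says that `F m = u m ^ (t - 1) - (t - 1) S(m+1) ^ (t - 2)` is nondecreasing, and
`F 0` is exactly the constant `u 0 ^ (t - 2) (u 0 - (t - 1) h ^ (t - 2))`. Multiplying
`F 0 ≤ F m` by `h u m` and using convexity of `x ^ (t - 1)` once more bounds the increment of
`h ∑ u k ^ t - S ^ (t - 1)` from below by `F 0` times the increment `h u m` of `S`; summing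
gives the theorem.
-/

open Real Finset

theorem Real.rpow_add_mul_rpow_sub_one_mul_sub_le {x y p : ℝ} (hx : 0 ≤ x) (hy : 0 ≤ y)
    (hp : 1 ≤ p) : x ^ p + p * x ^ (p - 1) * (y - x) ≤ y ^ p := by
  rcases hx.eq_or_lt with rfl | hx
  · rcases hp.eq_or_lt with rfl | hp
    · simp
    · rw [zero_rpow (by linarith), zero_rpow (by linarith)]
      simpa using rpow_nonneg hy p
  · have hs : -1 ≤ (y - x) / x := by rw [le_div_iff₀ hx]; linarith
    have hbern := one_add_mul_self_le_rpow_one_add hs hp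
    rw [show 1 + (y - x) / x = y / x by field_simp; ring, div_rpow hy hx.le,
      le_div_iff₀ (rpow_pos_of_pos hx p)] at hbern
    have hpow : x ^ p = x ^ (p - 1) * x := by rw [← rpow_add_one hx.ne', sub_add_cancel]
    calc x ^ p + p * x ^ (p - 1) * (y - x) = (1 + p * ((y - x) / x)) * x ^ p := by
          rw [hpow]; field_simp
      _ ≤ y ^ p := hbern

theorem Real.rpow_mul_le_rpow_add_one {a b q : ℝ} (ha : 0 ≤ a) (hab : a ≤ b)
    (hq : q + 1 ≠ 0) : b ^ q * a ≤ b ^ (q + 1) := by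
  rw [rpow_add_one' (ha.trans hab) hq]
  exact mul_le_mul_of_nonneg_left hab (rpow_nonneg (ha.trans hab) q)

/-- `∫_a^{a + m h} f Δx` on `a + hℤ`, where `u k = f (a + k h)`. -/
def deltaIntegral (h : ℝ) (u : ℕ → ℝ) (m : ℕ) : ℝ := h * ∑ k ∈ range m, u k

/-- The hypothesis of the theorem at the point `a + k h`. -/
def QiCondition (h t : ℝ) (u : ℕ → ℝ) (k : ℕ) : Prop :=
  (t - 2) * u (k + 2) ^ (t - 2) * (((k : ℝ) + 2) * h) ^ (t - 3) ≤
    u k ^ (t - 2) * (u (k + 1) - u k) / h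

namespace deltaIntegral

variable {h : ℝ} {u : ℕ → ℝ}

@[simp]
theorem zero : deltaIntegral h u 0 = 0 := by simp [deltaIntegral]

theorem succ (m : ℕ) : deltaIntegral h u (m + 1) = deltaIntegral h u m + h * u m := by
  simp only [deltaIntegral, sum_range_succ, mul_add]

theorem nonneg (hh : 0 ≤ h) (hu : ∀ k, 0 ≤ u k) (m : ℕ) : 0 ≤ deltaIntegral h u m :=
  mul_nonneg hh (sum_nonneg fun k _ => hu k)

theorem le_mul (hh : 0 ≤ h) (hu : Monotone u) (m : ℕ) :
    deltaIntegral h u m ≤ m * h * u m := by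
  calc deltaIntegral h u m ≤ h * ∑ _k ∈ range m, u m :=
        mul_le_mul_of_nonneg_left (sum_le_sum fun k hk => hu (mem_range.mp hk).le) hh
    _ = m * h * u m := by rw [sum_const, card_range, nsmul_eq_mul]; ring

end deltaIntegral

section

variable {h t : ℝ} {u : ℕ → ℝ}

theorem QiCondition.mul_deltaIntegral_rpow_sub_le_rpow_sub {m : ℕ} (hm : QiCondition h t u m)
    (hh : 0 < h) (hu0 : ∀ k, 0 ≤ u k) (hu : Monotone u) (ht : 3 ≤ t) :
    (t - 1) * (deltaIntegral h u (m + 2) ^ (t - 2) - deltaIntegral h u (m + 1) ^ (t - 2)) ≤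
      u (m + 1) ^ (t - 1) - u m ^ (t - 1) := by
  have hS_nonneg := deltaIntegral.nonneg hh.le hu0
  have hS_conv := rpow_add_mul_rpow_sub_one_mul_sub_le (hS_nonneg (m + 2)) (hS_nonneg (m + 1))
    (p := t - 2) (by linarith)
  have hS_sub : deltaIntegral h u (m + 1) - deltaIntegral h u (m + 2) = -(h * u (m + 1)) := by
    rw [deltaIntegral.succ (m + 1)]; ring
  rw [hS_sub, show t - 2 - 1 = t - 3 by ring] at hS_conv
  have hS_le : deltaIntegral h u (m + 2) ^ (t - 3) ≤
      (((m : ℝ) + 2) * h) ^ (t - 3) * u (m + 2) ^ (t - 3) := by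
    rw [← mul_rpow (by positivity) (hu0 _)]
    refine rpow_le_rpow (hS_nonneg _) ?_ (by linarith)
    simpa [add_assoc, one_add_one_eq_two] using deltaIntegral.le_mul hh.le hu (m + 2)
  have hu_le : u (m + 2) ^ (t - 3) * u (m + 1) ≤ u (m + 2) ^ (t - 2) := by
    simpa [show t - 3 + 1 = t - 2 by ring] using
      rpow_mul_le_rpow_add_one (hu0 _) (hu (m + 1).le_succ) (by linarith : t - 3 + 1 ≠ 0)
  have hbound : deltaIntegral h u (m + 2) ^ (t - 3) * u (m + 1) ≤
      (((m : ℝ) + 2) * h) ^ (t - 3) * u (m + 2) ^ (t - 2) :=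
    calc deltaIntegral h u (m + 2) ^ (t - 3) * u (m + 1)
        ≤ (((m : ℝ) + 2) * h) ^ (t - 3) * u (m + 2) ^ (t - 3) * u (m + 1) :=
          mul_le_mul_of_nonneg_right hS_le (hu0 _)
      _ ≤ (((m : ℝ) + 2) * h) ^ (t - 3) * u (m + 2) ^ (t - 2) := by
          rw [mul_assoc]; exact mul_le_mul_of_nonneg_left hu_le (by positivity)
  have hbound' := mul_le_mul_of_nonneg_left hbound
    (mul_nonneg (by linarith : (0 : ℝ) ≤ t - 2) hh.le)
  have hS_diff : deltaIntegral h u (m + 2) ^ (t - 2) - deltaIntegral h u (m + 1) ^ (t - 2) ≤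
      u m ^ (t - 2) * (u (m + 1) - u m) := by
    linarith [(le_div_iff₀ hh).1 hm]
  have hu_conv := rpow_add_mul_rpow_sub_one_mul_sub_le (hu0 m) (hu0 (m + 1)) (p := t - 1)
    (by linarith)
  rw [show t - 1 - 1 = t - 2 by ring] at hu_conv
  calc (t - 1) * (deltaIntegral h u (m + 2) ^ (t - 2) - deltaIntegral h u (m + 1) ^ (t - 2))
      ≤ (t - 1) * (u m ^ (t - 2) * (u (m + 1) - u m)) :=
        mul_le_mul_of_nonneg_left hS_diff (by linarith)
    _ ≤ u (m + 1) ^ (t - 1) - u m ^ (t - 1) := by linarith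

theorem le_rpow_sub_mul_deltaIntegral_rpow (hh : 0 < h) (hu0 : ∀ k, 0 ≤ u k)
    (hu : Monotone u) (ht : 3 ≤ t) {m : ℕ} (hcond : ∀ k < m, QiCondition h t u k) :
    u 0 ^ (t - 2) * (u 0 - (t - 1) * h ^ (t - 2)) ≤
      u m ^ (t - 1) - (t - 1) * deltaIntegral h u (m + 1) ^ (t - 2) := by
  induction m with
  | zero =>
    have hpow : u 0 ^ (t - 2) * u 0 = u 0 ^ (t - 1) := by
      rw [← rpow_add_one' (hu0 0) (by linarith)]; ring_nf
    rw [deltaIntegral.succ, deltaIntegral.zero, zero_add, mul_rpow hh.le (hu0 0)]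
    linarith
  | succ m ih =>
    have hstep := (hcond m m.lt_succ_self).mul_deltaIntegral_rpow_sub_le_rpow_sub hh hu0 hu ht
    linarith [ih fun k hk => hcond k (hk.trans m.lt_succ_self)]

theorem mul_deltaIntegral_le_sum_rpow_sub (hh : 0 < h) (hu0 : ∀ k, 0 ≤ u k) (hu : Monotone u)
    (ht : 3 ≤ t) {m : ℕ} (hcond : ∀ k, k + 2 ≤ m → QiCondition h t u k) :
    u 0 ^ (t - 2) * (u 0 - (t - 1) * h ^ (t - 2)) * deltaIntegral h u m ≤
      h * ∑ k ∈ range m, u k ^ t - deltaIntegral h u m ^ (t - 1) := by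
  induction m with
  | zero => simp [zero_rpow (by linarith : t - 1 ≠ 0)]
  | succ m ih =>
    have hF := le_rpow_sub_mul_deltaIntegral_rpow hh hu0 hu ht (m := m)
      fun k hk => hcond k (by omega)
    have hstep := mul_le_mul_of_nonneg_right hF (mul_nonneg hh.le (hu0 m))
    have hS_conv := rpow_add_mul_rpow_sub_one_mul_sub_le
      (deltaIntegral.nonneg hh.le hu0 (m + 1)) (deltaIntegral.nonneg hh.le hu0 m) (p := t - 1)
      (by linarith)
    have hS_sub : deltaIntegral h u m - deltaIntegral h u (m + 1) = -(h * u m) := by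
      rw [deltaIntegral.succ m]; ring
    rw [hS_sub, show t - 1 - 1 = t - 2 by ring] at hS_conv
    have hpow : h * (u m ^ (t - 1) * u m) = h * u m ^ t := by
      rw [← rpow_add_one' (hu0 m) (by linarith), sub_add_cancel]
    set c := u 0 ^ (t - 2) * (u 0 - (t - 1) * h ^ (t - 2))
    have hsplit : c * deltaIntegral h u (m + 1) = c * deltaIntegral h u m + c * (h * u m) := by
      rw [deltaIntegral.succ m, mul_add]
    rw [hsplit, sum_range_succ]
    linarith [ih fun k hk => hcond k (by omega)]

end

theorem qi_time_scale_hZ_thm31_general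
    (h : ℝ) (hh : 0 < h) (N : ℕ) (t : ℝ) (ht : 3 ≤ t)
    (u : ℕ → ℝ)
    (hnonneg : ∀ k, 0 ≤ u k)
    (hmono : ∀ k, u k ≤ u (k + 1))
    (hyp : ∀ k, k ≤ N - 1 →
      (t - 2) * u (k + 2) ^ (t - 2) * (((k : ℝ) + 2) * h) ^ (t - 3) ≤
        u k ^ (t - 2) * (u (k + 1) - u k) / h) :
    h * ∑ k ∈ Finset.range N, u k ^ t -
        (h * ∑ k ∈ Finset.range N, u k) ^ (t - 1) ≥
      u 0 ^ (t - 2) * (u 0 - (t - 1) * h ^ (t - 2)) *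
        (h * ∑ k ∈ Finset.range N, u k) :=
  mul_deltaIntegral_le_sum_rpow_sub hh hnonneg (monotone_nat_of_le_succ hmono) ht
    fun k hk => hyp k (by omega)

theorem qi_time_scale_hZ_thm31
    (h : ℝ) (hh : 0 < h) (N : ℕ) (hN : 1 ≤ N) (t : ℝ) (ht : 3 ≤ t)
    (u : ℕ → ℝ)
    (hnonneg : ∀ k, 0 ≤ u k)
    (hmono : ∀ k, u k ≤ u (k + 1))
    (hyp : ∀ k, k ≤ N - 1 →
      (t - 2) * u (k + 2) ^ (t - 2) * (((k : ℝ) + 2) * h) ^ (t - 3) ≤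
        u k ^ (t - 2) * (u (k + 1) - u k) / h) :
    h * ∑ k ∈ Finset.range N, u k ^ t -
        (h * ∑ k ∈ Finset.range N, u k) ^ (t - 1) ≥
      u 0 ^ (t - 2) * (u 0 - (t - 1) * h ^ (t - 2)) *
        (h * ∑ k ∈ Finset.range N, u k) :=
  qi_time_scale_hZ_thm31_general h hh N t ht u hnonneg hmono hyp
end

section
/- Let h > 0 be a real number, N ≥ 1 a natural number, and p ≥ 3 a real number. Let u : ℤ → ℝ satisfy u_k ≥ 0 and u_k ≤ u_{k+1} for all k ∈ ℤ. If for every integer k with 0 ≤ k ≤ N−1 one has u_k^{p−3}·(u_{k+1} − u_k)/h ≥ (p−2)·u_{k+2}^{p−3}·((k+2)·h)^{p−3}, then h·Σ_{k=0}^{N−1} u_k^p − (h·Σ_{k=0}^{N−1} u_{k−1})^{p−1} ≥ u_0^{p−2}·(u_0 − (p−1)·h^{p−2}) · h·Σ_{k=0}^{N−1} u_{k−1}. -/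
/-!
Write `A n = h ∑_{k<n} u (k-1)`. The tangent-line bounds for the convex powers `x ^ (p-1)` and
`x ^ (p-2)`, together with the hypothesis and `A (n+2) ≤ (n+2) h u (n+2)`, show that
`g n = u n ^ (p-1) - (p-1) A (n+1) ^ (p-2)` is nondecreasing, so `g n ≥ g 0 ≥ C`, where `C` is the
constant `u 0 ^ (p-2) (u 0 - (p-1) h ^ (p-2))` of the theorem. The tangent-line bound for
`x ^ (p-1)` and `u (n-1) ≤ u n` then give that the `n`-th increment of
`h ∑_{k<n} u k ^ p - A n ^ (p-1) - C A n` is at least `h u (n-1) (g n - C) ≥ 0`.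
-/

open Real Finset

lemma rpow_tangent_le {q a b : ℝ} (hq : 0 ≤ q) (ha : 0 ≤ a) (hb : 0 ≤ b) :
    b ^ (q + 1) + (q + 1) * b ^ q * (a - b) ≤ a ^ (q + 1) := by
  rcases hb.eq_or_lt with rfl | hb
  · rcases hq.eq_or_lt with rfl | hq
    · simp
    · simp [zero_rpow hq.ne', zero_rpow (by linarith : q + 1 ≠ 0)]
      positivity
  · have hs : -1 ≤ (a - b) / b := by rw [le_div_iff₀ hb]; linarith
    have bernoulli := one_add_mul_self_le_rpow_one_add hs (by linarith : 1 ≤ q + 1)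
    rw [show 1 + (a - b) / b = a / b by field_simp; ring, div_rpow ha hb.le,
      le_div_iff₀ (by positivity)] at bernoulli
    calc b ^ (q + 1) + (q + 1) * b ^ q * (a - b)
        = (1 + (q + 1) * ((a - b) / b)) * b ^ (q + 1) := by
          rw [rpow_add_one hb.ne']; field_simp
      _ ≤ a ^ (q + 1) := bernoulli

section

variable (h p : ℝ) (u : ℤ → ℝ)

/-- The delta integral `∫_a^{a+nh} f(ρ x) Δx` on `hℤ`, where `u k = f (a + k h)`. -/
noncomputable def rhoIntegral (n : ℕ) : ℝ :=
  h * ∑ k ∈ range n, u ((k : ℤ) - 1)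

noncomputable def gap (n : ℕ) : ℝ :=
  u n ^ (p - 1) - (p - 1) * rhoIntegral h u (n + 1) ^ (p - 2)

noncomputable def defect (n : ℕ) : ℝ :=
  h * ∑ k ∈ range n, u (k : ℤ) ^ p - rhoIntegral h u n ^ (p - 1)

end

variable {h p : ℝ} {u : ℤ → ℝ}

lemma rhoIntegral_succ (n : ℕ) :
    rhoIntegral h u (n + 1) = rhoIntegral h u n + h * u ((n : ℤ) - 1) := by
  simp [rhoIntegral, sum_range_succ, mul_add]

lemma rhoIntegral_nonneg (hh : 0 ≤ h) (hu : ∀ k, 0 ≤ u k) (n : ℕ) : 0 ≤ rhoIntegral h u n :=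
  mul_nonneg hh (sum_nonneg fun _ _ => hu _)

lemma rhoIntegral_le (hh : 0 ≤ h) (hu : Monotone u) {n : ℕ} {m : ℤ} (hm : (n : ℤ) ≤ m + 1) :
    rhoIntegral h u n ≤ n * h * u m := by
  calc rhoIntegral h u n ≤ h * ∑ _k ∈ range n, u m :=
        mul_le_mul_of_nonneg_left
          (sum_le_sum fun k hk => hu (by have := mem_range.mp hk; omega)) hh
    _ = n * h * u m := by simp only [sum_const, card_range, nsmul_eq_mul]; ring

lemma gap_le_gap_succ (hh : 0 < h) (hp : 3 ≤ p) (hu₀ : ∀ k, 0 ≤ u k) (hu : Monotone u) (n : ℕ)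
    (hyp : (p - 2) * u ((n : ℤ) + 2) ^ (p - 3) * (((n : ℝ) + 2) * h) ^ (p - 3) ≤
      u n ^ (p - 3) * (u ((n : ℤ) + 1) - u n) / h) :
    gap h p u n ≤ gap h p u (n + 1) := by
  simp only [gap, Nat.cast_add, Nat.cast_one]
  set A := rhoIntegral h u (n + 1)
  set B := rhoIntegral h u (n + 1 + 1)
  have hA : 0 ≤ A := rhoIntegral_nonneg hh.le hu₀ _
  have hB : 0 ≤ B := rhoIntegral_nonneg hh.le hu₀ _
  have hBA : B = A + h * u n := by simp [B, A, rhoIntegral_succ (n + 1)]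
  have hu_tangent := rpow_tangent_le (by linarith : 0 ≤ p - 2) (hu₀ (n + 1)) (hu₀ n)
  have hA_tangent := rpow_tangent_le (by linarith : 0 ≤ p - 3) hA hB
  rw [show p - 2 + 1 = p - 1 by ring] at hu_tangent
  rw [show p - 3 + 1 = p - 2 by ring] at hA_tangent
  have hBpow : B ^ (p - 3) ≤ (((n : ℝ) + 2) * h) ^ (p - 3) * u ((n : ℤ) + 2) ^ (p - 3) := by
    rw [← mul_rpow (by positivity) (hu₀ _)]
    refine rpow_le_rpow hB ?_ (by linarith)
    have := rhoIntegral_le (u := u) hh.le hu (n := n + 1 + 1) (m := (n : ℤ) + 2) (by push_cast; omega)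
    push_cast at this
    linarith
  have hhu : 0 ≤ h * u n := mul_nonneg hh.le (hu₀ _)
  have key : (p - 2) * B ^ (p - 3) * (h * u n) ≤ u n ^ (p - 2) * (u ((n : ℤ) + 1) - u n) :=
    calc (p - 2) * B ^ (p - 3) * (h * u n)
        ≤ (p - 2) * ((((n : ℝ) + 2) * h) ^ (p - 3) * u ((n : ℤ) + 2) ^ (p - 3)) * (h * u n) :=
          mul_le_mul_of_nonneg_right (mul_le_mul_of_nonneg_left hBpow (by linarith)) hhu
      _ = (p - 2) * u ((n : ℤ) + 2) ^ (p - 3) * (((n : ℝ) + 2) * h) ^ (p - 3) * (h * u n) := by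
          ring
      _ ≤ u n ^ (p - 3) * (u ((n : ℤ) + 1) - u n) / h * (h * u n) :=
          mul_le_mul_of_nonneg_right hyp hhu
      _ = u n ^ (p - 3 + 1) * (u ((n : ℤ) + 1) - u n) := by
          rw [rpow_add_one' (hu₀ _) (by linarith)]; field_simp
      _ = u n ^ (p - 2) * (u ((n : ℤ) + 1) - u n) := by ring_nf
  have hBA_pow : B ^ (p - 2) - A ^ (p - 2) ≤ u n ^ (p - 2) * (u ((n : ℤ) + 1) - u n) := by
    rw [hBA] at hA_tangent key ⊢; linarith
  nlinarith [mul_le_mul_of_nonneg_left hBA_pow (by linarith : 0 ≤ p - 1)]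

lemma le_gap_zero (hh : 0 < h) (hp : 3 ≤ p) (hu₀ : ∀ k, 0 ≤ u k) (hu : Monotone u) :
    u 0 ^ (p - 2) * (u 0 - (p - 1) * h ^ (p - 2)) ≤ gap h p u 0 := by
  have hA : rhoIntegral h u 1 ≤ h * u 0 := by
    simpa using rhoIntegral_le (n := 1) (m := 0) hh.le hu (by norm_num)
  have hApow : rhoIntegral h u 1 ^ (p - 2) ≤ h ^ (p - 2) * u 0 ^ (p - 2) := by
    rw [← mul_rpow hh.le (hu₀ 0)]
    exact rpow_le_rpow (rhoIntegral_nonneg hh.le hu₀ 1) (by linarith) (by linarith)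
  have hu0pow : u 0 ^ (p - 1) = u 0 ^ (p - 2) * u 0 := by
    rw [← rpow_add_one' (hu₀ 0) (by linarith)]; ring_nf
  simp only [gap, Nat.cast_zero, zero_add, hu0pow]
  nlinarith [mul_le_mul_of_nonneg_left hApow (by linarith : 0 ≤ p - 1)]

lemma defect_sub_le (hh : 0 < h) (hp : 3 ≤ p) (hu₀ : ∀ k, 0 ≤ u k) (hu : Monotone u) {C : ℝ}
    (n : ℕ) (hC : C ≤ gap h p u n) :
    defect h p u n - C * rhoIntegral h u n ≤ defect h p u (n + 1) - C * rhoIntegral h u (n + 1) := by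
  unfold gap at hC
  unfold defect
  rw [rhoIntegral_succ] at hC
  rw [sum_range_succ, rhoIntegral_succ]
  set A := rhoIntegral h u n
  set v := h * u ((n : ℤ) - 1)
  have hv : 0 ≤ v := mul_nonneg hh.le (hu₀ _)
  have hA : 0 ≤ A := rhoIntegral_nonneg hh.le hu₀ n
  have hA_tangent := rpow_tangent_le (by linarith : 0 ≤ p - 2) hA (add_nonneg hA hv)
  rw [show p - 2 + 1 = p - 1 by ring] at hA_tangent
  have hupow : v * u n ^ (p - 1) ≤ h * u n ^ p := by
    calc v * u n ^ (p - 1) ≤ h * u n * u n ^ (p - 1) :=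
          mul_le_mul_of_nonneg_right (mul_le_mul_of_nonneg_left (hu (by omega)) hh.le)
            (rpow_nonneg (hu₀ _) _)
      _ = h * u n ^ (p - 1 + 1) := by rw [rpow_add_one' (hu₀ _) (by linarith)]; ring
      _ = h * u n ^ p := by ring_nf
  nlinarith [mul_le_mul_of_nonneg_left hC hv]

theorem qi_time_scale_hZ_thm33_general
    (h : ℝ) (hh : 0 < h) (N : ℕ) (p : ℝ) (hp : 3 ≤ p)
    (u : ℤ → ℝ)
    (hnonneg : ∀ k : ℤ, 0 ≤ u k)
    (hmono : ∀ k : ℤ, u k ≤ u (k + 1))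
    (hyp : ∀ k : ℤ, 0 ≤ k → k ≤ (N : ℤ) - 1 →
      (p - 2) * u (k + 2) ^ (p - 3) * (((k : ℝ) + 2) * h) ^ (p - 3) ≤
        u k ^ (p - 3) * (u (k + 1) - u k) / h) :
    h * ∑ k ∈ Finset.range N, u (k : ℤ) ^ p -
        (h * ∑ k ∈ Finset.range N, u ((k : ℤ) - 1)) ^ (p - 1) ≥
      u 0 ^ (p - 2) * (u 0 - (p - 1) * h ^ (p - 2)) *
        (h * ∑ k ∈ Finset.range N, u ((k : ℤ) - 1)) := by
  set C := u 0 ^ (p - 2) * (u 0 - (p - 1) * h ^ (p - 2))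
  have hu : Monotone u := monotone_int_of_le_succ hmono
  have hgap : MonotoneOn (gap h p u) (Set.Iic N) :=
    monotoneOn_of_le_add_one Set.ordConnected_Iic fun n _ _ hn =>
      gap_le_gap_succ hh hp hnonneg hu n <| by
        have hn : n + 1 ≤ N := hn
        exact_mod_cast hyp n (by positivity) (by omega)
  have hdefect : MonotoneOn (fun n => defect h p u n - C * rhoIntegral h u n) (Set.Iic N) :=
    monotoneOn_of_le_add_one Set.ordConnected_Iic fun n _ hn _ =>
      defect_sub_le hh hp hnonneg hu n <|
        (le_gap_zero hh hp hnonneg hu).trans (hgap (by simp) hn (Nat.zero_le n))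
  have := hdefect (by simp) (Set.mem_Iic.2 le_rfl) (Nat.zero_le N)
  simp only [defect, rhoIntegral, range_zero, sum_empty, mul_zero,
    zero_rpow (by linarith : p - 1 ≠ 0), sub_zero] at this
  linarith

theorem qi_time_scale_hZ_thm33
    (h : ℝ) (hh : 0 < h) (N : ℕ) (hN : 1 ≤ N) (p : ℝ) (hp : 3 ≤ p)
    (u : ℤ → ℝ)
    (hnonneg : ∀ k : ℤ, 0 ≤ u k)
    (hmono : ∀ k : ℤ, u k ≤ u (k + 1))
    (hyp : ∀ k : ℤ, 0 ≤ k → k ≤ (N : ℤ) - 1 →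
      (p - 2) * u (k + 2) ^ (p - 3) * (((k : ℝ) + 2) * h) ^ (p - 3) ≤
        u k ^ (p - 3) * (u (k + 1) - u k) / h) :
    h * ∑ k ∈ Finset.range N, u (k : ℤ) ^ p -
        (h * ∑ k ∈ Finset.range N, u ((k : ℤ) - 1)) ^ (p - 1) ≥
      u 0 ^ (p - 2) * (u 0 - (p - 1) * h ^ (p - 2)) *
        (h * ∑ k ∈ Finset.range N, u ((k : ℤ) - 1)) :=
  qi_time_scale_hZ_thm33_general h hh N p hp u hnonneg hmono hyp
end

section
/- Let h > 0 be a real number, N ≥ 1 a natural number, and t ≥ 3 a real number. Let u : ℕ → ℝ satisfy u_k ≥ 0 and u_k ≤ u_{k+1} for all k. If for every k with 1 ≤ k ≤ N one has u_{k−1}^{t−2}·(u_k − u_{k−1})/h ≥ (t−2)·u_k^{t−2}·(k·h)^{t−3}, then h·Σ_{k=1}^{N} u_k^t − (h·Σ_{k=1}^{N} u_k)^{t−1} ≥ u_0^{t−1} · h·Σ_{k=1}^{N} u_k. -/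
/-! Write `S n = h * ∑_{k=1}^{n} u k`. The convexity of `x ↦ x ^ p` for `p ≥ 1`, in the form of
the two tangent-line bounds `a ^ p + p a ^ (p-1) (b - a) ≤ b ^ p` and
`b ^ p - a ^ p ≤ p b ^ (p-1) (b - a)`, replaces the chain rule. Using `S n ≤ n h u n`, the
hypothesis makes each increment of `(t-1) S ^ (t-2)` at most the corresponding increment of
`u ^ (t-1)`, so `u 0 ^ (t-1) + (t-1) S n ^ (t-2) ≤ u n ^ (t-1)`. Multiplying this by
`S (n+1) - S n = h u (n+1)` bounds the increment of `u 0 ^ (t-1) S + S ^ (t-1)` by `h u (n+1) ^ t`,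
and summing gives `u 0 ^ (t-1) S N + S N ^ (t-1) ≤ h ∑_{k=1}^{N} u k ^ t`. -/

open Real Finset

lemma rpow_add_mul_rpow_sub_one_mul_sub_le_rpow {a b p : ℝ} (ha : 0 ≤ a) (hb : 0 ≤ b)
    (hp : 1 ≤ p) : a ^ p + p * a ^ (p - 1) * (b - a) ≤ b ^ p := by
  rcases ha.eq_or_lt with rfl | ha
  · rcases hp.eq_or_lt with rfl | hp
    · simp
    · simp [zero_rpow (by linarith : p ≠ 0), zero_rpow (by linarith : p - 1 ≠ 0), rpow_nonneg hb]
  · have bernoulli := one_add_mul_self_le_rpow_one_add (s := b / a - 1)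
      (by linarith [div_nonneg hb ha.le]) hp
    rw [add_sub_cancel, div_rpow hb ha.le, le_div_iff₀ (rpow_pos_of_pos ha p)] at bernoulli
    calc a ^ p + p * a ^ (p - 1) * (b - a) = (1 + p * (b / a - 1)) * a ^ p := by
          rw [rpow_sub_one ha.ne']; field_simp
      _ ≤ b ^ p := bernoulli

lemma rpow_sub_rpow_le_mul_rpow_sub_one_mul_sub {a b p : ℝ} (ha : 0 ≤ a) (hb : 0 ≤ b)
    (hp : 1 ≤ p) : b ^ p - a ^ p ≤ p * b ^ (p - 1) * (b - a) := by
  linarith [rpow_add_mul_rpow_sub_one_mul_sub_le_rpow hb ha hp]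

/-- The nabla integral `∫_a^{a+nh} f(x) ∇x` on `a + hℤ`, where `u k = f (a + k h)`. -/
def nablaIntegral (h : ℝ) (u : ℕ → ℝ) (n : ℕ) : ℝ := h * ∑ k ∈ Icc 1 n, u k

section NablaIntegral

variable {h t : ℝ} {u : ℕ → ℝ}

@[simp]
lemma nablaIntegral_zero (h : ℝ) (u : ℕ → ℝ) : nablaIntegral h u 0 = 0 := by
  simp [nablaIntegral]

lemma nablaIntegral_succ (h : ℝ) (u : ℕ → ℝ) (n : ℕ) :
    nablaIntegral h u (n + 1) = nablaIntegral h u n + h * u (n + 1) := by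
  rw [nablaIntegral, nablaIntegral, sum_Icc_succ_top (by omega), mul_add]

lemma nablaIntegral_nonneg (hh : 0 ≤ h) (hu : ∀ k, 0 ≤ u k) (n : ℕ) :
    0 ≤ nablaIntegral h u n :=
  mul_nonneg hh (sum_nonneg fun k _ => hu k)

lemma nablaIntegral_le_of_monotone (hh : 0 ≤ h) (hu : Monotone u) (n : ℕ) :
    nablaIntegral h u n ≤ n * h * u n := by
  have hsum : ∑ k ∈ Icc 1 n, u k ≤ n * u n := by
    simpa using sum_le_card_nsmul (Icc 1 n) u (u n) fun k hk => hu (mem_Icc.mp hk).2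
  calc nablaIntegral h u n ≤ h * (n * u n) := mul_le_mul_of_nonneg_left hsum hh
    _ = n * h * u n := by ring

lemma nablaIntegral_succ_rpow_sub_rpow_le {p : ℝ} (hh : 0 ≤ h) (hu : ∀ k, 0 ≤ u k)
    (hp : 1 ≤ p) (n : ℕ) :
    nablaIntegral h u (n + 1) ^ p - nablaIntegral h u n ^ p ≤
      p * nablaIntegral h u (n + 1) ^ (p - 1) * (h * u (n + 1)) := by
  have := rpow_sub_rpow_le_mul_rpow_sub_one_mul_sub (nablaIntegral_nonneg hh hu n)
    (nablaIntegral_nonneg hh hu (n + 1)) hp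
  simpa only [nablaIntegral_succ h u n, add_sub_cancel_left] using this

lemma nablaIntegral_succ_rpow_sub_rpow_le_mul_sub (hh : 0 < h) (ht : 3 ≤ t)
    (hu : ∀ k, 0 ≤ u k) (hmono : Monotone u) (n : ℕ)
    (hyp : (t - 2) * u (n + 1) ^ (t - 2) * (((n + 1 : ℕ) : ℝ) * h) ^ (t - 3) ≤
      u n ^ (t - 2) * (u (n + 1) - u n) / h) :
    nablaIntegral h u (n + 1) ^ (t - 2) - nablaIntegral h u n ^ (t - 2) ≤
      u n ^ (t - 2) * (u (n + 1) - u n) := by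
  have hincr := nablaIntegral_succ_rpow_sub_rpow_le hh.le hu (by linarith : 1 ≤ t - 2) n
  rw [show t - 2 - 1 = t - 3 by ring] at hincr
  have hbound : nablaIntegral h u (n + 1) ^ (t - 3) ≤
      (((n + 1 : ℕ) : ℝ) * h) ^ (t - 3) * u (n + 1) ^ (t - 3) := by
    rw [← mul_rpow (by positivity) (hu _)]
    exact rpow_le_rpow (nablaIntegral_nonneg hh.le hu _)
      (nablaIntegral_le_of_monotone hh.le hmono _) (by linarith)
  have hpow : u (n + 1) ^ (t - 2) = u (n + 1) ^ (t - 3) * u (n + 1) := by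
    rw [← rpow_add_one' (hu _) (by linarith)]; ring_nf
  calc _ ≤ (t - 2) * ((((n + 1 : ℕ) : ℝ) * h) ^ (t - 3) * u (n + 1) ^ (t - 3)) *
          (h * u (n + 1)) := by
        refine hincr.trans ?_
        gcongr
        · exact mul_nonneg hh.le (hu _)
        · linarith
    _ = (t - 2) * u (n + 1) ^ (t - 2) * (((n + 1 : ℕ) : ℝ) * h) ^ (t - 3) * h := by
        rw [hpow]; ring
    _ ≤ u n ^ (t - 2) * (u (n + 1) - u n) := (le_div_iff₀ hh).mp hyp

lemma rpow_zero_add_mul_nablaIntegral_rpow_le (hh : 0 < h) (ht : 3 ≤ t)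
    (hu : ∀ k, 0 ≤ u k) (hmono : Monotone u) {n : ℕ}
    (hyp : ∀ k, 1 ≤ k → k ≤ n →
      (t - 2) * u k ^ (t - 2) * ((k : ℝ) * h) ^ (t - 3) ≤
        u (k - 1) ^ (t - 2) * (u k - u (k - 1)) / h) :
    u 0 ^ (t - 1) + (t - 1) * nablaIntegral h u n ^ (t - 2) ≤ u n ^ (t - 1) := by
  induction n with
  | zero => simp [zero_rpow (by linarith : t - 2 ≠ 0)]
  | succ n ih =>
    have ih := ih fun k hk hkn => hyp k hk (by omega)
    have hyp_succ := hyp (n + 1) (by omega) le_rfl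
    simp only [Nat.add_sub_cancel] at hyp_succ
    have hincr := nablaIntegral_succ_rpow_sub_rpow_le_mul_sub hh ht hu hmono n hyp_succ
    have hconv := rpow_add_mul_rpow_sub_one_mul_sub_le_rpow (hu n) (hu (n + 1))
      (by linarith : 1 ≤ t - 1)
    rw [show t - 1 - 1 = t - 2 by ring] at hconv
    linarith [mul_le_mul_of_nonneg_left hincr (by linarith : 0 ≤ t - 1)]

lemma rpow_zero_mul_nablaIntegral_add_rpow_le (hh : 0 < h) (ht : 3 ≤ t)
    (hu : ∀ k, 0 ≤ u k) (hmono : Monotone u) {n : ℕ}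
    (hyp : ∀ k, 1 ≤ k → k ≤ n →
      (t - 2) * u k ^ (t - 2) * ((k : ℝ) * h) ^ (t - 3) ≤
        u (k - 1) ^ (t - 2) * (u k - u (k - 1)) / h) :
    u 0 ^ (t - 1) * nablaIntegral h u n + nablaIntegral h u n ^ (t - 1) ≤
      nablaIntegral h (fun k => u k ^ t) n := by
  induction n with
  | zero => simp [zero_rpow (by linarith : t - 1 ≠ 0)]
  | succ n ih =>
    have ih := ih fun k hk hkn => hyp k hk (by omega)
    have hA := mul_le_mul_of_nonneg_right
      (rpow_zero_add_mul_nablaIntegral_rpow_le hh ht hu hmono hyp)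
      (mul_nonneg hh.le (hu (n + 1)))
    have hincr := nablaIntegral_succ_rpow_sub_rpow_le hh.le hu (by linarith : 1 ≤ t - 1) n
    rw [show t - 1 - 1 = t - 2 by ring] at hincr
    set S := nablaIntegral h u n
    set S' := nablaIntegral h u (n + 1)
    have hS' : S' = S + h * u (n + 1) := nablaIntegral_succ h u n
    have hpow : u (n + 1) ^ t = u (n + 1) ^ (t - 1) * u (n + 1) := by
      rw [← rpow_add_one' (hu _) (by linarith)]; ring_nf
    rw [nablaIntegral_succ, hpow]
    have hlin : u 0 ^ (t - 1) * S' = u 0 ^ (t - 1) * S + u 0 ^ (t - 1) * (h * u (n + 1)) := by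
      rw [hS']; ring
    linarith

end NablaIntegral

theorem qi_nabla_hZ_thm36_general
    (h : ℝ) (hh : 0 < h) (N : ℕ) (t : ℝ) (ht : 3 ≤ t)
    (u : ℕ → ℝ)
    (hnonneg : ∀ k, 0 ≤ u k)
    (hmono : ∀ k, u k ≤ u (k + 1))
    (hyp : ∀ k, 1 ≤ k → k ≤ N →
      (t - 2) * u k ^ (t - 2) * ((k : ℝ) * h) ^ (t - 3) ≤
        u (k - 1) ^ (t - 2) * (u k - u (k - 1)) / h) :
    h * ∑ k ∈ Finset.Icc 1 N, u k ^ t -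
        (h * ∑ k ∈ Finset.Icc 1 N, u k) ^ (t - 1) ≥
      u 0 ^ (t - 1) * (h * ∑ k ∈ Finset.Icc 1 N, u k) := by
  have hbound := rpow_zero_mul_nablaIntegral_add_rpow_le hh ht hnonneg
    (monotone_nat_of_le_succ hmono) hyp
  simp only [nablaIntegral] at hbound
  linarith

theorem qi_nabla_hZ_thm36
    (h : ℝ) (hh : 0 < h) (N : ℕ) (hN : 1 ≤ N) (t : ℝ) (ht : 3 ≤ t)
    (u : ℕ → ℝ)
    (hnonneg : ∀ k, 0 ≤ u k)
    (hmono : ∀ k, u k ≤ u (k + 1))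
    (hyp : ∀ k, 1 ≤ k → k ≤ N →
      (t - 2) * u k ^ (t - 2) * ((k : ℝ) * h) ^ (t - 3) ≤
        u (k - 1) ^ (t - 2) * (u k - u (k - 1)) / h) :
    h * ∑ k ∈ Finset.Icc 1 N, u k ^ t -
        (h * ∑ k ∈ Finset.Icc 1 N, u k) ^ (t - 1) ≥
      u 0 ^ (t - 1) * (h * ∑ k ∈ Finset.Icc 1 N, u k) :=
  qi_nabla_hZ_thm36_general h hh N t ht u hnonneg hmono hyp
end

section
/- Let h > 0 be a real number, N ≥ 1 a natural number, and p ≥ 1 a real number. Let u : ℕ → ℝ satisfy u_k ≥ 0 and u_k ≤ u_{k+1} for all k. If for every k with 1 ≤ k ≤ N one has u_{k−1}^p·(u_k − u_{k−1})/h ≥ (p/(N·h)^{p−1})·u_k^p·(k·h)^{p−1}, then h·Σ_{k=1}^{N} u_k^{p+2} − (1/(N·h)^{p−1})·(h·Σ_{k=1}^{N} u_k)^{p+1} ≥ u_0^{p+1} · h·Σ_{k=1}^{N} u_k. -/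
/-!
Write `S n = h ∑_{k=1}^n u_k` and `c = (N h)^{1-p}`. Convexity of `x ↦ x^q` for `q ≥ 1` bounds
`S_{n+1}^p - S_n^p` by `p ((n+1) h)^{p-1} u_{n+1}^p h` (since `S_{n+1} ≤ (n+1) h u_{n+1}`), so the
hypothesis, combined with `u_{n+1}^{p+1} - u_n^{p+1} ≥ (p+1) u_n^p (u_{n+1} - u_n)`, telescopes to
`u_0^{p+1} + (p+1) c S_n^p ≤ u_n^{p+1}`. Multiplying by `h u_{n+1}` and using convexity once more,
`u_0^{p+1} S_n + c S_n^{p+1}` grows by at most `h u_{n+1}^{p+2}` per step, which sums to the claim.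
-/

open Real Finset

lemma rpow_add_mul_rpow_sub_one_mul_sub_le_rpow_s14 {x y q : ℝ} (hx : 0 ≤ x) (hy : 0 ≤ y)
    (hq : 1 ≤ q) : x ^ q + q * x ^ (q - 1) * (y - x) ≤ y ^ q := by
  rcases hx.eq_or_lt with rfl | hx
  · rcases hq.eq_or_lt with rfl | hq
    · simp
    · rw [zero_rpow (by linarith), zero_rpow (by linarith)]
      simpa using rpow_nonneg hy q
  · have hbernoulli := one_add_mul_self_le_rpow_one_add
      (s := y / x - 1) (by linarith [div_nonneg hy hx.le]) hq
    rw [add_sub_cancel, div_rpow hy hx.le] at hbernoulli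
    have hxq : x ^ q = x ^ (q - 1) * x := by
      rw [← rpow_add_one' hx.le (by linarith), sub_add_cancel]
    have hxq_pos : 0 < x ^ q := rpow_pos_of_pos hx q
    calc x ^ q + q * x ^ (q - 1) * (y - x) = x ^ q * (1 + q * (y / x - 1)) := by
          rw [hxq]; field_simp
      _ ≤ x ^ q * (y ^ q / x ^ q) := by gcongr
      _ = y ^ q := by field_simp

lemma le_of_le_at_zero_of_increments_le {α : Type*} [AddCommGroup α] [PartialOrder α]
    [IsOrderedAddMonoid α] {a b : ℕ → α} {N : ℕ} (h0 : a 0 ≤ b 0)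
    (hstep : ∀ n < N, a (n + 1) - a n ≤ b (n + 1) - b n) : a N ≤ b N := by
  induction N with
  | zero => exact h0
  | succ n ih =>
    calc a (n + 1) = a n + (a (n + 1) - a n) := (add_sub_cancel _ _).symm
      _ ≤ b n + (b (n + 1) - b n) :=
          add_le_add (ih fun m hm => hstep m (by omega)) (hstep n (by omega))
      _ = b (n + 1) := add_sub_cancel _ _

namespace nablaIntegral

variable {h : ℝ} {u : ℕ → ℝ}

@[simp]
lemma zero : nablaIntegral h u 0 = 0 := by
  simp [nablaIntegral]

lemma succ (n : ℕ) : nablaIntegral h u (n + 1) = nablaIntegral h u n + h * u (n + 1) := by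
  rw [nablaIntegral, nablaIntegral, sum_Icc_succ_top (Nat.le_add_left 1 n), mul_add]

lemma nonneg (hh : 0 ≤ h) (hu : ∀ k, 0 ≤ u k) (n : ℕ) : 0 ≤ nablaIntegral h u n :=
  mul_nonneg hh (sum_nonneg fun k _ => hu k)

lemma le_of_monotone (hh : 0 ≤ h) (hu : Monotone u) (n : ℕ) :
    nablaIntegral h u n ≤ n * h * u n := by
  have hsum : ∑ k ∈ Icc 1 n, u k ≤ n * u n := by
    simpa using sum_le_sum fun k (hk : k ∈ Icc 1 n) => hu (mem_Icc.mp hk).2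
  calc nablaIntegral h u n ≤ h * (n * u n) := mul_le_mul_of_nonneg_left hsum hh
    _ = n * h * u n := by ring

end nablaIntegral

section NablaOpialType

open nablaIntegral

variable {h p c : ℝ} {u : ℕ → ℝ}

local notation "S" => nablaIntegral h u

lemma rpow_nablaIntegral_succ_sub_le (hh : 0 < h) (hp : 1 ≤ p) (hc : 0 ≤ c)
    (hu0 : ∀ k, 0 ≤ u k) (hu : Monotone u) (n : ℕ)
    (hyp : p * c * u (n + 1) ^ p * (((n + 1 : ℕ) : ℝ) * h) ^ (p - 1) ≤
      u n ^ p * (u (n + 1) - u n) / h) :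
    (p + 1) * c * (S (n + 1) ^ p - S n ^ p) ≤ u (n + 1) ^ (p + 1) - u n ^ (p + 1) := by
  set v := u (n + 1)
  set W := (((n + 1 : ℕ) : ℝ) * h) ^ (p - 1)
  have hv : 0 ≤ v := hu0 (n + 1)
  have hS_pow : S (n + 1) ^ (p - 1) ≤ W * v ^ (p - 1) := by
    rw [← mul_rpow (by positivity) hv]
    exact rpow_le_rpow (nonneg hh.le hu0 _) (le_of_monotone hh.le hu _) (by linarith)
  have hv_pow : v ^ (p - 1) * v = v ^ p := by
    rw [← rpow_add_one' hv (by linarith), sub_add_cancel]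
  have hS_incr : S (n + 1) ^ p - S n ^ p ≤ p * W * v ^ p * h := by
    have htangent := rpow_add_mul_rpow_sub_one_mul_sub_le_rpow_s14
      (nonneg hh.le hu0 (n + 1)) (nonneg hh.le hu0 n) hp
    have hstep : S (n + 1) - S n = h * v := by rw [succ]; ring
    calc _ ≤ p * S (n + 1) ^ (p - 1) * (S (n + 1) - S n) := by linarith
      _ = p * S (n + 1) ^ (p - 1) * (h * v) := by rw [hstep]
      _ ≤ p * (W * v ^ (p - 1)) * (h * v) := by gcongr
      _ = p * W * v ^ p * h := by rw [← hv_pow]; ring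
  have hyp' : p * c * v ^ p * W * h ≤ u n ^ p * (v - u n) := by
    simpa [div_mul_cancel₀ _ hh.ne'] using mul_le_mul_of_nonneg_right hyp hh.le
  have hu_incr := rpow_add_mul_rpow_sub_one_mul_sub_le_rpow_s14 (hu0 n) hv (by linarith : 1 ≤ p + 1)
  rw [add_sub_cancel_right] at hu_incr
  calc (p + 1) * c * (S (n + 1) ^ p - S n ^ p) ≤ (p + 1) * c * (p * W * v ^ p * h) := by gcongr
    _ = (p + 1) * (p * c * v ^ p * W * h) := by ring
    _ ≤ (p + 1) * (u n ^ p * (v - u n)) := by gcongr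
    _ ≤ v ^ (p + 1) - u n ^ (p + 1) := by linarith

lemma rpow_zero_add_mul_rpow_nablaIntegral_le (hh : 0 < h) (hp : 1 ≤ p) (hc : 0 ≤ c)
    (hu0 : ∀ k, 0 ≤ u k) (hu : Monotone u) {N : ℕ}
    (hyp : ∀ k, 1 ≤ k → k ≤ N → p * c * u k ^ p * ((k : ℝ) * h) ^ (p - 1) ≤
      u (k - 1) ^ p * (u k - u (k - 1)) / h) {n : ℕ} (hn : n ≤ N) :
    u 0 ^ (p + 1) + (p + 1) * c * S n ^ p ≤ u n ^ (p + 1) := by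
  refine le_of_le_at_zero_of_increments_le (a := fun n => u 0 ^ (p + 1) + (p + 1) * c * S n ^ p)
    (b := fun n => u n ^ (p + 1)) (by simp [zero_rpow (by linarith : p ≠ 0)]) fun m hm => ?_
  have hyp_succ := hyp (m + 1) (by omega) (by omega)
  rw [Nat.add_sub_cancel] at hyp_succ
  have := rpow_nablaIntegral_succ_sub_le hh hp hc hu0 hu m hyp_succ
  linarith

lemma rpow_zero_mul_nablaIntegral_add_mul_rpow_le (hh : 0 < h) (hp : 1 ≤ p) (hc : 0 ≤ c)
    (hu0 : ∀ k, 0 ≤ u k) (hu : Monotone u) {N : ℕ}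
    (hyp : ∀ k, 1 ≤ k → k ≤ N → p * c * u k ^ p * ((k : ℝ) * h) ^ (p - 1) ≤
      u (k - 1) ^ p * (u k - u (k - 1)) / h) :
    u 0 ^ (p + 1) * S N + c * S N ^ (p + 1) ≤ nablaIntegral h (fun k => u k ^ (p + 2)) N := by
  refine le_of_le_at_zero_of_increments_le (a := fun n => u 0 ^ (p + 1) * S n + c * S n ^ (p + 1))
    (b := nablaIntegral h (fun k => u k ^ (p + 2)))
    (by simp [zero_rpow (by linarith : p + 1 ≠ 0)]) fun m hm => ?_
  set v := u (m + 1)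
  have hv : 0 ≤ v := hu0 (m + 1)
  have hstep : S (m + 1) - S m = h * v := by rw [succ]; ring
  have hv_pow : v ^ (p + 1) * v = v ^ (p + 2) := by
    rw [← rpow_add_one' hv (by linarith)]; ring_nf
  have hS_incr : S (m + 1) ^ (p + 1) - S m ^ (p + 1) ≤ (p + 1) * S (m + 1) ^ p * (h * v) := by
    have := rpow_add_mul_rpow_sub_one_mul_sub_le_rpow_s14
      (nonneg hh.le hu0 (m + 1)) (nonneg hh.le hu0 m) (by linarith : 1 ≤ p + 1)
    rw [add_sub_cancel_right] at this
    rw [← hstep]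
    linarith
  have hu_bound : h * v * (u 0 ^ (p + 1) + (p + 1) * c * S (m + 1) ^ p) ≤ h * v * v ^ (p + 1) :=
    mul_le_mul_of_nonneg_left
      (rpow_zero_add_mul_rpow_nablaIntegral_le hh hp hc hu0 hu hyp (by omega : m + 1 ≤ N))
      (mul_nonneg hh.le hv)
  have hcS_incr := mul_le_mul_of_nonneg_left hS_incr hc
  have hu0_incr : u 0 ^ (p + 1) * S (m + 1) = u 0 ^ (p + 1) * S m + u 0 ^ (p + 1) * (h * v) := by
    rw [succ]; ring
  rw [succ (u := fun k => u k ^ (p + 2)), ← hv_pow]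
  linarith

end NablaOpialType

theorem qi_nabla_hZ_thm37_general
    (h : ℝ) (hh : 0 < h) (N : ℕ) (p : ℝ) (hp : 1 ≤ p)
    (u : ℕ → ℝ)
    (hnonneg : ∀ k, 0 ≤ u k)
    (hmono : ∀ k, u k ≤ u (k + 1))
    (hyp : ∀ k, 1 ≤ k → k ≤ N →
      (p / ((N : ℝ) * h) ^ (p - 1)) * u k ^ p * ((k : ℝ) * h) ^ (p - 1) ≤
        u (k - 1) ^ p * (u k - u (k - 1)) / h) :
    h * ∑ k ∈ Finset.Icc 1 N, u k ^ (p + 2) -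
        (1 / ((N : ℝ) * h) ^ (p - 1)) *
          (h * ∑ k ∈ Finset.Icc 1 N, u k) ^ (p + 1) ≥
      u 0 ^ (p + 1) * (h * ∑ k ∈ Finset.Icc 1 N, u k) := by
  have hc : 0 ≤ 1 / ((N : ℝ) * h) ^ (p - 1) := by positivity
  have key := rpow_zero_mul_nablaIntegral_add_mul_rpow_le hh hp hc hnonneg
    (monotone_nat_of_le_succ hmono)
    (fun k hk hkN => by simpa only [div_eq_mul_one_div p] using hyp k hk hkN)
  simp only [nablaIntegral] at key
  linarith

theorem qi_nabla_hZ_thm37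
    (h : ℝ) (hh : 0 < h) (N : ℕ) (hN : 1 ≤ N) (p : ℝ) (hp : 1 ≤ p)
    (u : ℕ → ℝ)
    (hnonneg : ∀ k, 0 ≤ u k)
    (hmono : ∀ k, u k ≤ u (k + 1))
    (hyp : ∀ k, 1 ≤ k → k ≤ N →
      (p / ((N : ℝ) * h) ^ (p - 1)) * u k ^ p * ((k : ℝ) * h) ^ (p - 1) ≤
        u (k - 1) ^ p * (u k - u (k - 1)) / h) :
    h * ∑ k ∈ Finset.Icc 1 N, u k ^ (p + 2) -
        (1 / ((N : ℝ) * h) ^ (p - 1)) *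
          (h * ∑ k ∈ Finset.Icc 1 N, u k) ^ (p + 1) ≥
      u 0 ^ (p + 1) * (h * ∑ k ∈ Finset.Icc 1 N, u k) :=
  qi_nabla_hZ_thm37_general h hh N p hp u hnonneg hmono hyp
end

section
/- Let q > 1 be a real number, m ∈ ℤ, N ≥ 1 a natural number, and t ≥ 3 a real number. Let u : ℤ → ℝ satisfy u_k ≥ 0 and u_k ≤ u_{k+1} for all k. If for every integer k with m ≤ k ≤ m+N−1 one has u_k^{t−2}·(u_{k+1} − u_k)/((q−1)·q^k) ≥ (t−2)·q·u_{k+2}^{t−2}·(q^{k+2} − q^m)^{t−3}, then Σ_{k=m}^{m+N−1} (q−1)·q^k·u_k^t − (Σ_{k=m}^{m+N−1} (q−1)·q^k·u_k)^{t−1} ≥ u_m^{t−2}·(u_m − (t−1)·((q−1)·q^m)^{t−2}) · Σ_{k=m}^{m+N−1} (q−1)·q^k·u_k. -/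
open Real Finset

/-!
Put `w i = (q - 1) q ^ (m + i)`, `v i = u (m + i)` and `S n = ∑_{i < n} w i v i`. Via the two
tangent-line bounds for the convex function `x ↦ x ^ p` and `S (n + 2) ≤ v (n + 2) ∑_{i < n + 2} w i`,
the hypothesis makes `v n ^ (t - 1) - (t - 1) S (n + 1) ^ (t - 2)` nondecreasing in `n`; at `n = 0`
it equals the constant `c` of the right-hand side. Hence each term increases
`∑ w v ^ t - S ^ (t - 1)` by at least `c w n v n`, once more by the tangent-line bound, and
summing gives the inequality. Nothing about `q` enters except `∑_{i < n} w i = q ^ (m + n) - q ^ m`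
and `w (n + 1) = q w n`.
-/

namespace Real

lemma mul_rpow_sub_one_mul_sub_le_rpow_sub_rpow {p a b : ℝ} (hp : 1 ≤ p) (ha : 0 ≤ a)
    (hab : a ≤ b) : p * a ^ (p - 1) * (b - a) ≤ b ^ p - a ^ p := by
  rcases hab.eq_or_lt with rfl | hlt
  · simp
  have h := (convexOn_rpow hp).le_slope_of_hasDerivAt ha (ha.trans hab) hlt
    (hasDerivAt_rpow_const (Or.inr hp))
  rwa [slope_def_field, le_div_iff₀ (sub_pos.2 hlt)] at h

lemma rpow_sub_rpow_le_mul_rpow_sub_one_mul_sub {p a b : ℝ} (hp : 1 ≤ p) (ha : 0 ≤ a)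
    (hab : a ≤ b) : b ^ p - a ^ p ≤ p * b ^ (p - 1) * (b - a) := by
  rcases hab.eq_or_lt with rfl | hlt
  · simp
  have h := (convexOn_rpow hp).slope_le_of_hasDerivAt ha (ha.trans hab) hlt
    (hasDerivAt_rpow_const (Or.inr hp))
  rwa [slope_def_field, div_le_iff₀ (sub_pos.2 hlt)] at h

lemma rpow_eq_rpow_sub_one_mul {x s : ℝ} (hx : 0 ≤ x) (hs : s ≠ 0) :
    x ^ s = x ^ (s - 1) * x := by
  rw [← rpow_add_one' hx (by simpa using hs), sub_add_cancel]

end Real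

lemma mul_mul_add_rpow_sub_rpow_le {t a w v c : ℝ} (ht : 2 ≤ t) (ha : 0 ≤ a) (hw : 0 ≤ w)
    (hv : 0 ≤ v) (hc : c ≤ v ^ (t - 1) - (t - 1) * (a + w * v) ^ (t - 2)) :
    c * (w * v) + ((a + w * v) ^ (t - 1) - a ^ (t - 1)) ≤ w * v ^ t := by
  have hwv : 0 ≤ w * v := mul_nonneg hw hv
  have hgrowth :
      (a + w * v) ^ (t - 1) - a ^ (t - 1) ≤ (t - 1) * (a + w * v) ^ (t - 2) * (w * v) := by
    have h := rpow_sub_rpow_le_mul_rpow_sub_one_mul_sub (by linarith : 1 ≤ t - 1) ha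
      (le_add_of_nonneg_right hwv)
    rwa [show t - 1 - 1 = t - 2 by ring, add_sub_cancel_left] at h
  have hsplit : w * v ^ t = w * v * v ^ (t - 1) := by
    rw [rpow_eq_rpow_sub_one_mul hv (by linarith)]
    ring
  linarith [mul_le_mul_of_nonneg_left hc hwv]

lemma mul_add_rpow_sub_rpow_le_rpow_sub_rpow {t a w x y z W : ℝ} (ht : 3 ≤ t) (ha : 0 ≤ a)
    (hw : 0 ≤ w) (hy : 0 ≤ y) (hyx : y ≤ x) (hxz : x ≤ z) (hW : 0 ≤ W)
    (hsum : a + w * x ≤ z * W)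
    (h : (t - 2) * w * z ^ (t - 2) * W ^ (t - 3) ≤ y ^ (t - 2) * (x - y)) :
    (t - 1) * ((a + w * x) ^ (t - 2) - a ^ (t - 2)) ≤ x ^ (t - 1) - y ^ (t - 1) := by
  have hx : 0 ≤ x := hy.trans hyx
  have hz : 0 ≤ z := hx.trans hxz
  have hupper :
      (a + w * x) ^ (t - 2) - a ^ (t - 2) ≤ (t - 2) * (a + w * x) ^ (t - 3) * (w * x) := by
    have h := rpow_sub_rpow_le_mul_rpow_sub_one_mul_sub (by linarith : 1 ≤ t - 2) ha
      (le_add_of_nonneg_right (mul_nonneg hw hx))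
    rwa [show t - 2 - 1 = t - 3 by ring, add_sub_cancel_left] at h
  have hlower : (t - 1) * y ^ (t - 2) * (x - y) ≤ x ^ (t - 1) - y ^ (t - 1) := by
    have h := mul_rpow_sub_one_mul_sub_le_rpow_sub_rpow (by linarith : 1 ≤ t - 1) hy hyx
    rwa [show t - 1 - 1 = t - 2 by ring] at h
  have hmiddle : (a + w * x) ^ (t - 3) * x ≤ z ^ (t - 2) * W ^ (t - 3) := calc
    (a + w * x) ^ (t - 3) * x ≤ (z * W) ^ (t - 3) * z := by gcongr
    _ = z ^ (t - 2) * W ^ (t - 3) := by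
      rw [mul_rpow hz hW, rpow_eq_rpow_sub_one_mul hz (by linarith : t - 2 ≠ 0),
        show t - 2 - 1 = t - 3 by ring]
      ring
  have ht1 : 0 ≤ t - 1 := by linarith
  have ht2w : 0 ≤ (t - 2) * w := mul_nonneg (by linarith) hw
  calc (t - 1) * ((a + w * x) ^ (t - 2) - a ^ (t - 2))
      ≤ (t - 1) * ((t - 2) * w * ((a + w * x) ^ (t - 3) * x)) := by
        refine mul_le_mul_of_nonneg_left (hupper.trans_eq ?_) ht1
        ring
    _ ≤ (t - 1) * ((t - 2) * w * (z ^ (t - 2) * W ^ (t - 3))) :=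
        mul_le_mul_of_nonneg_left (mul_le_mul_of_nonneg_left hmiddle ht2w) ht1
    _ ≤ (t - 1) * (y ^ (t - 2) * (x - y)) :=
        mul_le_mul_of_nonneg_left ((mul_assoc _ _ _).symm.trans_le h) ht1
    _ ≤ x ^ (t - 1) - y ^ (t - 1) := by linarith

def weightedSum (w v : ℕ → ℝ) (n : ℕ) : ℝ := ∑ i ∈ range n, w i * v i

section WeightedSum

variable {w v : ℕ → ℝ} {t c : ℝ} {N : ℕ}

@[simp]
lemma weightedSum_zero : weightedSum w v 0 = 0 := sum_range_zero _

lemma weightedSum_succ (n : ℕ) : weightedSum w v (n + 1) = weightedSum w v n + w n * v n :=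
  sum_range_succ _ n

lemma weightedSum_nonneg (hw : ∀ i, 0 ≤ w i) (hv : ∀ i, 0 ≤ v i) (n : ℕ) :
    0 ≤ weightedSum w v n :=
  sum_nonneg fun i _ ↦ mul_nonneg (hw i) (hv i)

lemma weightedSum_le_mul_sum (hw : ∀ i, 0 ≤ w i) (hv : Monotone v) (n : ℕ) :
    weightedSum w v n ≤ v n * ∑ i ∈ range n, w i := by
  rw [mul_sum]
  refine sum_le_sum fun i hi ↦ ?_
  rw [mul_comm (v n)]
  exact mul_le_mul_of_nonneg_left (hv (mem_range.1 hi).le) (hw i)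

lemma le_rpow_sub_mul_weightedSum_rpow (ht : 3 ≤ t) (hw : ∀ i, 0 ≤ w i) (hv0 : ∀ i, 0 ≤ v i)
    (hv : Monotone v)
    (h : ∀ n, n + 1 < N → (t - 2) * w (n + 1) * v (n + 2) ^ (t - 2) *
      (∑ i ∈ range (n + 2), w i) ^ (t - 3) ≤ v n ^ (t - 2) * (v (n + 1) - v n)) :
    ∀ n < N, v 0 ^ (t - 2) * (v 0 - (t - 1) * w 0 ^ (t - 2)) ≤
      v n ^ (t - 1) - (t - 1) * weightedSum w v (n + 1) ^ (t - 2) := by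
  intro n hn
  induction n with
  | zero =>
    rw [zero_add, weightedSum_succ, weightedSum_zero, zero_add, mul_rpow (hw 0) (hv0 0),
      rpow_eq_rpow_sub_one_mul (hv0 0) (by linarith : t - 1 ≠ 0), show t - 1 - 1 = t - 2 by ring]
    exact le_of_eq (by ring)
  | succ n ih =>
    have hsum : weightedSum w v (n + 1) + w (n + 1) * v (n + 1) ≤
        v (n + 2) * ∑ i ∈ range (n + 2), w i := by
      rw [← weightedSum_succ]
      exact weightedSum_le_mul_sum hw hv _
    have hstep := mul_add_rpow_sub_rpow_le_rpow_sub_rpow ht (weightedSum_nonneg hw hv0 _)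
      (hw (n + 1)) (hv0 n) (hv n.le_succ) (hv (n + 1).le_succ)
      (sum_nonneg fun i _ ↦ hw i) hsum (h n hn)
    rw [weightedSum_succ (n + 1)]
    linarith [ih (by omega)]

lemma mul_weightedSum_add_rpow_le (ht : 2 ≤ t) (hw : ∀ i, 0 ≤ w i) (hv0 : ∀ i, 0 ≤ v i)
    (hc : ∀ n < N, c ≤ v n ^ (t - 1) - (t - 1) * weightedSum w v (n + 1) ^ (t - 2)) :
    c * weightedSum w v N + weightedSum w v N ^ (t - 1) ≤ weightedSum w (fun i ↦ v i ^ t) N := by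
  induction N with
  | zero => simp [zero_rpow (by linarith : t - 1 ≠ 0)]
  | succ N ih =>
    have hinc := mul_mul_add_rpow_sub_rpow_le ht (weightedSum_nonneg hw hv0 N) (hw N) (hv0 N)
      (weightedSum_succ (w := w) (v := v) N ▸ hc N N.lt_succ_self)
    rw [weightedSum_succ, weightedSum_succ]
    linarith [ih fun n hn ↦ hc n (hn.trans N.lt_succ_self)]

theorem mul_weightedSum_le_weightedSum_rpow_sub_rpow (ht : 3 ≤ t) (hw : ∀ i, 0 ≤ w i)
    (hv0 : ∀ i, 0 ≤ v i) (hv : Monotone v)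
    (h : ∀ n, n + 1 < N → (t - 2) * w (n + 1) * v (n + 2) ^ (t - 2) *
      (∑ i ∈ range (n + 2), w i) ^ (t - 3) ≤ v n ^ (t - 2) * (v (n + 1) - v n)) :
    v 0 ^ (t - 2) * (v 0 - (t - 1) * w 0 ^ (t - 2)) * weightedSum w v N ≤
      weightedSum w (fun i ↦ v i ^ t) N - weightedSum w v N ^ (t - 1) := by
  have := mul_weightedSum_add_rpow_le (by linarith) hw hv0
    (le_rpow_sub_mul_weightedSum_rpow ht hw hv0 hv h)
  linarith

end WeightedSum

lemma sum_Icc_eq_sum_range {M : Type*} [AddCommMonoid M] (f : ℤ → M) (m : ℤ) (N : ℕ) :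
    ∑ k ∈ Icc m (m + N - 1), f k = ∑ i ∈ range N, f (m + i) := by
  rw [Int.Icc_eq_finset_map, sum_map, show (m + N - 1 + 1 - m).toNat = N by omega]
  rfl

lemma sum_range_sub_one_mul_zpow {q : ℝ} (hq : q ≠ 0) (m : ℤ) (n : ℕ) :
    ∑ i ∈ range n, (q - 1) * q ^ (m + i) = q ^ (m + n) - q ^ m := by
  have h := sum_range_sub (fun i : ℕ ↦ q ^ (m + i)) n
  simp only [Nat.cast_add, Nat.cast_one, Nat.cast_zero, add_zero, ← add_assoc,
    zpow_add_one₀ hq] at h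
  rw [← h]
  exact sum_congr rfl fun i _ ↦ by ring

theorem qi_time_scale_qZ_thm31_general
    (q : ℝ) (hq : 1 < q) (m : ℤ) (N : ℕ) (t : ℝ) (ht : 3 ≤ t)
    (u : ℤ → ℝ)
    (hnonneg : ∀ k : ℤ, 0 ≤ u k)
    (hmono : ∀ k : ℤ, u k ≤ u (k + 1))
    (hyp : ∀ k : ℤ, m ≤ k → k ≤ m + (N : ℤ) - 1 →
      (t - 2) * q * u (k + 2) ^ (t - 2) * (q ^ (k + 2) - q ^ m) ^ (t - 3) ≤
        u k ^ (t - 2) * (u (k + 1) - u k) / ((q - 1) * q ^ k)) :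
    (∑ k ∈ Finset.Icc m (m + (N : ℤ) - 1), (q - 1) * q ^ k * u k ^ t) -
        (∑ k ∈ Finset.Icc m (m + (N : ℤ) - 1), (q - 1) * q ^ k * u k) ^ (t - 1) ≥
      u m ^ (t - 2) * (u m - (t - 1) * ((q - 1) * q ^ m) ^ (t - 2)) *
        ∑ k ∈ Finset.Icc m (m + (N : ℤ) - 1), (q - 1) * q ^ k * u k := by
  have hq0 : q ≠ 0 := by positivity
  have hw : ∀ k : ℤ, 0 < (q - 1) * q ^ k := fun k ↦ mul_pos (by linarith) (by positivity)
  have hv : Monotone fun i : ℕ ↦ u (m + i) :=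
    (monotone_int_of_le_succ hmono).comp fun i j hij ↦ by simpa using hij
  have key := mul_weightedSum_le_weightedSum_rpow_sub_rpow (N := N) ht (fun i ↦ (hw (m + i)).le)
    (fun i ↦ hnonneg (m + i)) hv fun n hn ↦ by
      have h := (le_div_iff₀ (hw (m + n))).1 (hyp (m + n) (by omega) (by omega))
      rw [sum_range_sub_one_mul_zpow hq0]
      push_cast
      simp only [← add_assoc, zpow_add_one₀ hq0] at h ⊢
      linarith
  simp only [sum_Icc_eq_sum_range]
  simpa only [weightedSum, ge_iff_le, mul_assoc, Nat.cast_zero, add_zero] using key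

theorem qi_time_scale_qZ_thm31
    (q : ℝ) (hq : 1 < q) (m : ℤ) (N : ℕ) (hN : 1 ≤ N) (t : ℝ) (ht : 3 ≤ t)
    (u : ℤ → ℝ)
    (hnonneg : ∀ k : ℤ, 0 ≤ u k)
    (hmono : ∀ k : ℤ, u k ≤ u (k + 1))
    (hyp : ∀ k : ℤ, m ≤ k → k ≤ m + (N : ℤ) - 1 →
      (t - 2) * q * u (k + 2) ^ (t - 2) * (q ^ (k + 2) - q ^ m) ^ (t - 3) ≤
        u k ^ (t - 2) * (u (k + 1) - u k) / ((q - 1) * q ^ k)) :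
    (∑ k ∈ Finset.Icc m (m + (N : ℤ) - 1), (q - 1) * q ^ k * u k ^ t) -
        (∑ k ∈ Finset.Icc m (m + (N : ℤ) - 1), (q - 1) * q ^ k * u k) ^ (t - 1) ≥
      u m ^ (t - 2) * (u m - (t - 1) * ((q - 1) * q ^ m) ^ (t - 2)) *
        ∑ k ∈ Finset.Icc m (m + (N : ℤ) - 1), (q - 1) * q ^ k * u k :=
  qi_time_scale_qZ_thm31_general q hq m N t ht u hnonneg hmono hyp
end
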